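/- arXiv:2204.01367 — 5 statements merged into one kernel-verified Lean document; each statement's English description precedes it below -/
import Mathlib

section
/- The embedding i: B → M₂(K) induces an isomorphism of Q-algebras from B onto the subalgebra {x ∈ M₂(K) : x̄ · IJ = IJ · x}, where I = diag(−α,1), J = [[0,−1],[1,0]], and x̄ denotes entrywise application of the nontrivial automorphism of K over Q. -/
open Quaternion Matrix

/-- The embedding `i : ℍ[ℚ,α,β] → M₂(K)` of the paper, with `s = √β ∈ K`. -/
def quatEmb (α β : ℚ) (K : Type) [Field K] [Algebra ℚ K] (s : K)
    (x : ℍ[ℚ, α, β]) : Matrix (Fin 2) (Fin 2) K :=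
  !![algebraMap ℚ K x.re + algebraMap ℚ K x.imJ * s,
     algebraMap ℚ K α * (algebraMap ℚ K x.imI - algebraMap ℚ K x.imK * s);
     algebraMap ℚ K x.imI + algebraMap ℚ K x.imK * s,
     algebraMap ℚ K x.re - algebraMap ℚ K x.imJ * s]

/-- The quaternionic basis of `M₂(K)` given by the images of `i, j, k`. -/
def quatBasis (α β : ℚ) (K : Type) [Field K] [Algebra ℚ K] (s : K)
    (hs : s ^ 2 = algebraMap ℚ K β) :
    QuaternionAlgebra.Basis (Matrix (Fin 2) (Fin 2) K) α 0 β where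
  i := !![0, algebraMap ℚ K α; 1, 0]
  j := !![s, 0; 0, -s]
  k := !![0, -(algebraMap ℚ K α * s); s, 0]
  i_mul_i := by
    ext i j
    fin_cases i <;> fin_cases j <;>
      simp [Matrix.mul_apply, Fin.sum_univ_two, Matrix.smul_apply, Algebra.smul_def, Matrix.algebraMap_matrix_apply]
  j_mul_j := by
    have hss : s * s = algebraMap ℚ K β := by rw [← pow_two]; exact hs
    ext i j
    fin_cases i <;> fin_cases j <;>
      simp [Matrix.mul_apply, Fin.sum_univ_two, Matrix.smul_apply, Algebra.smul_def, hss]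
  i_mul_j := by
    ext i j
    fin_cases i <;> fin_cases j <;>
      simp [Matrix.mul_apply, Fin.sum_univ_two]
  j_mul_i := by
    ext i j
    fin_cases i <;> fin_cases j <;>
      simp [Matrix.mul_apply, Fin.sum_univ_two, mul_comm]

/-- The embedding `i : B → M₂(K)` induces a ℚ-algebra isomorphism
of `B = ℍ[ℚ,α,β]` (β not a square, `K = ℚ(√β)`) onto
`{x ∈ M₂(K) : x̄ · (IJ) = (IJ) · x}`, where `I = diag(−α,1)`,
`J = [[0,−1],[1,0]]` and `x̄` is the entrywise nontrivial automorphism `σ`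
of `K/ℚ` (`σ(s) = −s`). -/
theorem stmt2 (α β : ℚ) (hα : α ≠ 0) (hβ : β ≠ 0)
    (hβns : ¬∃ q : ℚ, q ^ 2 = β)
    (K : Type) [Field K] [Algebra ℚ K] (s : K)
    (hs : s ^ 2 = algebraMap ℚ K β)
    (hgen : Algebra.adjoin ℚ ({s} : Set K) = ⊤)
    (σ : K ≃+* K) (hσ : σ s = -s) :
    ∃ f : ℍ[ℚ, α, β] →ₐ[ℚ] Matrix (Fin 2) (Fin 2) K,
      (∀ x, f x = quatEmb α β K s x) ∧ Function.Injective f ∧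
      Set.range f =
        {x : Matrix (Fin 2) (Fin 2) K |
          x.map σ * (!![-(algebraMap ℚ K α), 0; 0, 1] * !![0, -1; 1, 0]) =
            (!![-(algebraMap ℚ K α), 0; 0, 1] * !![0, -1; 1, 0]) * x} := by
  have hinj : Function.Injective (algebraMap ℚ K) := (algebraMap ℚ K).injective
  haveI : CharZero K := charZero_of_injective_algebraMap hinj
  have hs0 : s ≠ 0 := by
    intro h
    apply hβ
    apply hinj
    rw [map_zero, ← hs, h]
    ring
  have hσQ : ∀ q : ℚ, σ (algebraMap ℚ K q) = algebraMap ℚ K q := by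
    intro q
    rw [eq_ratCast (algebraMap ℚ K) q]
    exact map_ratCast (σ : K →+* K) q
  have hσ' : σ.symm s = -s := by
    apply σ.injective
    rw [RingEquiv.apply_symm_apply, map_neg, hσ, neg_neg]
  have hσQ' : ∀ q : ℚ, σ.symm (algebraMap ℚ K q) = algebraMap ℚ K q := by
    intro q
    rw [eq_ratCast (algebraMap ℚ K) q]
    exact map_ratCast (σ.symm : K →+* K) q
  -- decomposition of elements of K
  have hss : s * s = algebraMap ℚ K β := by rw [← pow_two]; exact hs
  have hdecomp : ∀ x : K, ∃ a c : ℚ, x = algebraMap ℚ K a + algebraMap ℚ K c * s := by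
    intro x
    have hx : x ∈ Algebra.adjoin ℚ ({s} : Set K) := by rw [hgen]; trivial
    induction hx using Algebra.adjoin_induction with
    | mem y hy =>
      rw [Set.mem_singleton_iff] at hy
      exact ⟨0, 1, by simp [hy]⟩
    | algebraMap r => exact ⟨r, 0, by simp⟩
    | add y z hy hz ihy ihz =>
      obtain ⟨a, c, rfl⟩ := ihy
      obtain ⟨a', c', rfl⟩ := ihz
      exact ⟨a + a', c + c', by rw [map_add, map_add]; ring⟩
    | mul y z hy hz ihy ihz =>
      obtain ⟨a, c, rfl⟩ := ihy
      obtain ⟨a', c', rfl⟩ := ihz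
      refine ⟨a * a' + c * c' * β, a * c' + c * a', ?_⟩
      rw [map_add, _root_.map_mul, _root_.map_mul, _root_.map_mul, map_add,
        _root_.map_mul, _root_.map_mul]
      linear_combination (algebraMap ℚ K c * algebraMap ℚ K c') * hss
  -- uniqueness part
  have huniq : ∀ a c : ℚ, algebraMap ℚ K a + algebraMap ℚ K c * s = 0 → a = 0 ∧ c = 0 := by
    intro a c h
    have h2 : algebraMap ℚ K a - algebraMap ℚ K c * s = 0 := by
      have := congrArg σ h
      rwa [map_zero, map_add, _root_.map_mul, hσQ, hσQ, hσ, mul_neg, ← sub_eq_add_neg] at this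
    have ha : algebraMap ℚ K (a + a) = 0 := by rw [map_add]; linear_combination h + h2
    have hc2 : algebraMap ℚ K c * s + algebraMap ℚ K c * s = 0 := by linear_combination h - h2
    have ha' : a = 0 := by
      have := hinj (ha.trans (map_zero (algebraMap ℚ K)).symm)
      linarith
    have hc' : c = 0 := by
      have hc : algebraMap ℚ K c * s = 0 := add_self_eq_zero.mp hc2
      rcases mul_eq_zero.mp hc with h' | h'
      · exact hinj (by rw [h', map_zero])
      · exact absurd h' hs0
    exact ⟨ha', hc'⟩
  -- the product matrix I * J
  have hN : !![-(algebraMap ℚ K α), 0; 0, 1] * !![0, -1; 1, 0] =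
      !![0, algebraMap ℚ K α; 1, 0] := by
    ext i j
    fin_cases i <;> fin_cases j <;> simp [Matrix.mul_apply, Fin.sum_univ_two]
  set q := quatBasis α β K s hs with hq
  have hf : ∀ x, q.liftHom x = quatEmb α β K s x := by
    intro x
    show q.lift x = _
    unfold QuaternionAlgebra.Basis.lift quatEmb
    rw [hq]
    unfold quatBasis
    ext i j
    fin_cases i <;> fin_cases j <;>
      simp [Matrix.mul_apply, Fin.sum_univ_two, Matrix.add_apply, Matrix.smul_apply,
        Matrix.algebraMap_matrix_apply, Algebra.smul_def] <;> ring
  refine ⟨q.liftHom, hf, ?_, ?_⟩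
  · rw [injective_iff_map_eq_zero]
    intro x hx0
    rw [hf] at hx0
    have h00 := congrFun (congrFun hx0 0) 0
    have h10 := congrFun (congrFun hx0 1) 0
    simp only [quatEmb, Matrix.cons_val', Matrix.cons_val_zero, Matrix.cons_val_one,
      Matrix.head_cons, Matrix.head_fin_const, Matrix.empty_val', Matrix.cons_val_fin_one,
      Matrix.zero_apply, Matrix.of_apply] at h00 h10
    obtain ⟨hre, himJ⟩ := huniq _ _ h00
    obtain ⟨himI, himK⟩ := huniq _ _ h10
    ext <;> simp [hre, himJ, himI, himK]
  · ext x
    simp only [Set.mem_range, Set.mem_setOf_eq, hN]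
    constructor
    · rintro ⟨y, rfl⟩
      rw [hf]
      ext i j
      fin_cases i <;> fin_cases j <;>
        simp [quatEmb, Matrix.mul_apply, Fin.sum_univ_two, Matrix.map_apply,
          map_add, _root_.map_mul, map_sub, hσQ, hσ] <;> ring
    · intro hx
      have h10 := congrFun (congrFun hx 1) 0
      have h11 := congrFun (congrFun hx 1) 1
      simp only [Matrix.mul_apply, Fin.sum_univ_two, Matrix.map_apply, Matrix.cons_val',
        Matrix.cons_val_zero, Matrix.cons_val_one, Matrix.head_cons, Matrix.empty_val',
        Matrix.cons_val_fin_one, Matrix.head_fin_const, Matrix.of_apply,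
        mul_zero, mul_one, zero_mul, one_mul, add_zero, zero_add] at h10 h11
      obtain ⟨a, c, hp⟩ := hdecomp (x 0 0)
      obtain ⟨b, d, hr⟩ := hdecomp (x 1 0)
      refine ⟨⟨a, b, c, d⟩, ?_⟩
      rw [hf]
      have ht : x 1 1 = algebraMap ℚ K a - algebraMap ℚ K c * s := by
        have h := congrArg σ.symm h10
        rw [RingEquiv.symm_apply_apply] at h
        rw [h, hp, map_add, _root_.map_mul, hσQ', hσQ', hσ']
        ring
      have hq01 : x 0 1 = algebraMap ℚ K α * (algebraMap ℚ K b - algebraMap ℚ K d * s) := by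
        rw [← h11, hr, map_add, _root_.map_mul, hσQ, hσQ, hσ]
        ring
      ext i j
      fin_cases i <;> fin_cases j <;>
        simp [quatEmb, hp, hr, ht, hq01]
end

section
/- The Cayley transform z ↦ (z−i·1ₙ)(z+i·1ₙ)⁻¹ gives a bijection from the unbounded domain 𝔥 = {z ∈ Cⁿˣⁿ : zᵗz + 1 = 0, i(z*−z) > 0} onto the bounded domain 𝔅 = {z ∈ Cⁿˣⁿ : zᵗ = −z, zz* < 1ₙ}. -/
open Matrix
open scoped ComplexOrder

namespace Stmt7Aux

variable {n : ℕ}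

local notation "I" => Complex.I
local notation "Mn" => Matrix (Fin n) (Fin n) ℂ
local notation "J" => (Complex.I • (1 : Matrix (Fin n) (Fin n) ℂ))

lemma mulJ (X : Mn) : X * J = I•X := by rw [mul_smul_comm, mul_one]
lemma Jmul (X : Mn) : J * X = I•X := by rw [smul_mul_assoc, one_mul]
lemma JJ : (J : Mn) * J = -1 := by
  rw [mulJ, smul_smul, Complex.I_mul_I, neg_smul, one_smul]

lemma exp1 (X Y : Mn) : (X - J) * (Y + J) = X*Y + I•X - I•Y + 1 := by
  rw [Matrix.sub_mul, Matrix.mul_add, Matrix.mul_add, mulJ, Jmul, JJ]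
  abel

lemma exp2 (X Y : Mn) : (X + J) * (Y - J) = X*Y - I•X + I•Y + 1 := by
  rw [Matrix.add_mul, Matrix.mul_sub, Matrix.mul_sub, mulJ, Jmul, JJ]
  abel

lemma ctJ : (J : Mn)ᴴ = -J := by
  simp [conjTranspose_smul, Complex.star_def, Complex.conj_I]

lemma tJ : (J : Mn)ᵀ = J := by simp

/-- congruence of a PosDef matrix -/
lemma posDef_conj {A B : Mn} (hA : A.PosDef) (hB : IsUnit B.det) :
    (Bᴴ * A * B).PosDef := by
  refine Matrix.PosDef.of_dotProduct_mulVec_pos (isHermitian_conjTranspose_mul_mul B hA.1) fun x hx => ?_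
  have hBx : B *ᵥ x ≠ 0 := fun h => hx (eq_zero_of_mulVec_eq_zero hB.ne_zero h)
  simpa only [star_mulVec, dotProduct_mulVec, vecMul_vecMul] using hA.dotProduct_mulVec_pos hBx

lemma posDef_conj' {A B : Mn} (hA : A.PosDef) (hB : IsUnit B.det) :
    (B * A * Bᴴ).PosDef := by
  have hBH : IsUnit Bᴴ.det := by rw [det_conjTranspose]; exact hB.star
  simpa only [conjTranspose_conjTranspose] using posDef_conj hA hBH

lemma congr_posdef {P C : Mn} (hC : IsUnit C.det) (h : (C * P * Cᴴ).PosDef) :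
    P.PosDef := by
  have hCH : IsUnit Cᴴ.det := by rw [det_conjTranspose]; exact hC.star
  have hP : P = C⁻¹ * (C * P * Cᴴ) * (C⁻¹)ᴴ := by
    rw [conjTranspose_nonsing_inv, Matrix.mul_assoc C P Cᴴ,
      nonsing_inv_mul_cancel_left _ _ hC, mul_nonsing_inv_cancel_right _ _ hCH]
  rw [hP]
  exact posDef_conj' h (isUnit_nonsing_inv_det _ hC)

lemma map_star_mulVec (A : Mn) (v : Fin n → ℂ) :
    (A.map star) *ᵥ (star v) = star (A *ᵥ v) := by
  ext i
  simp [Matrix.mulVec, dotProduct, star_sum, star_mul', Matrix.map_apply]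

lemma isUnit_hA {z : Mn} (h2 : (I • (zᴴ - z)).PosDef) : IsUnit (z + J).det := by
  have hct : (z + J)ᴴ = zᴴ - J := by
    rw [conjTranspose_add, ctJ, ← sub_eq_add_neg]
  have key : (z + J)ᴴ * (z + J) = zᴴ*z + (I • (zᴴ - z) + 1) := by
    rw [hct, exp1, smul_sub]
    abel
  have hp : ((z + J)ᴴ * (z + J)).PosDef := by
    rw [key]
    exact Matrix.PosDef.posSemidef_add (posSemidef_conjTranspose_mul_self z)
      (h2.add_posSemidef Matrix.PosSemidef.one)
  have hdet : ((z + J)ᴴ * (z + J)).det ≠ 0 := hp.det_pos.ne'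
  rw [det_mul, det_conjTranspose] at hdet
  exact isUnit_iff_ne_zero.2 (fun h => hdet (by rw [h, mul_zero]))

lemma isUnit_oneSub {w : Mn} (hsk : wᵀ = -w) (hpd : (1 - w * wᴴ).PosDef) :
    IsUnit (1 - w).det := by
  rw [isUnit_iff_ne_zero]
  intro hdet
  obtain ⟨v, hv, hmv⟩ := (Matrix.exists_mulVec_eq_zero_iff).2 hdet
  have hwv : w *ᵥ v = v := by
    have := hmv
    rw [sub_mulVec, one_mulVec, sub_eq_zero] at this
    exact this.symm
  have hx0 : star v ≠ 0 := fun h => hv (by simpa [star_eq_zero] using h)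
  have h1 : wᴴ = -(w.map star) := by
    have : wᴴ = (wᵀ).map star := rfl
    rw [this, hsk]
    ext i j
    simp [Matrix.map_apply]
  have h2 : wᴴ *ᵥ star v = -(star v) := by
    rw [h1, neg_mulVec, map_star_mulVec, hwv]
  have h3 : v ᵥ* w = -v := by
    rw [← mulVec_transpose, hsk, neg_mulVec, hwv]
  have hval : star (star v) ⬝ᵥ ((1 - w * wᴴ) *ᵥ (star v)) = 0 := by
    rw [star_star, sub_mulVec, one_mulVec, ← mulVec_mulVec, h2, mulVec_neg,
      sub_neg_eq_add, dotProduct_add, dotProduct_mulVec, h3, neg_dotProduct,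
      add_neg_cancel]
  have := hpd.dotProduct_mulVec_pos hx0
  rw [hval] at this
  exact lt_irrefl _ this



lemma fwd {z : Mn} (h1 : zᵀ * z + 1 = 0) (h2 : (I • (zᴴ - z)).PosDef) :
    ((z - J) * (z + J)⁻¹)ᵀ = -((z - J) * (z + J)⁻¹) ∧
    ((1 : Mn) - ((z - J) * (z + J)⁻¹) * ((z - J) * (z + J)⁻¹)ᴴ).PosDef := by
  have hA : IsUnit (z + J).det := isUnit_hA h2
  set A := z + J with hAdef
  have hz : zᵀ * z = -1 := eq_neg_of_add_eq_zero_left h1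
  have hwc : (z - J) * A⁻¹ = A⁻¹ * (z - J) := by
    have h0 : A * ((z - J) * A⁻¹) = z - J := by
      rw [← Matrix.mul_assoc]
      have hAc : A * (z - J) = (z - J) * A := by rw [hAdef, exp2, exp1]; abel
      rw [hAc, mul_nonsing_inv_cancel_right _ _ hA]
    calc (z - J) * A⁻¹ = A⁻¹ * (A * ((z - J) * A⁻¹)) :=
          (nonsing_inv_mul_cancel_left _ _ hA).symm
      _ = A⁻¹ * (z - J) := by rw [h0]
  constructor
  · have hAT : IsUnit Aᵀ.det := by rw [det_transpose]; exact hA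
    have hkey : (zᵀ - J) * A = -(Aᵀ * (z - J)) := by
      rw [hAdef, transpose_add, tJ, exp1, exp2, hz]
      abel
    calc ((z - J) * A⁻¹)ᵀ = (Aᵀ)⁻¹ * (zᵀ - J) := by
          rw [transpose_mul, transpose_nonsing_inv, transpose_sub, tJ]
      _ = (Aᵀ)⁻¹ * ((zᵀ - J) * A * A⁻¹) := by
          rw [mul_nonsing_inv_cancel_right _ _ hA]
      _ = (Aᵀ)⁻¹ * (-(Aᵀ * (z - J)) * A⁻¹) := by rw [hkey]
      _ = -(((Aᵀ)⁻¹ * Aᵀ) * ((z - J) * A⁻¹)) := by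
          simp only [neg_mul, mul_neg, Matrix.mul_assoc]
      _ = -((z - J) * A⁻¹) := by rw [nonsing_inv_mul _ hAT, one_mul]
  · have hAH : Aᴴ = zᴴ - J := by rw [hAdef, conjTranspose_add, ctJ, ← sub_eq_add_neg]
    have hAHu : IsUnit Aᴴ.det := by rw [det_conjTranspose]; exact hA.star
    have hwH : ((z - J) * A⁻¹)ᴴ = (zᴴ + J) * (Aᴴ)⁻¹ := by
      rw [hwc, conjTranspose_mul, conjTranspose_nonsing_inv, conjTranspose_sub, ctJ,
        sub_neg_eq_add]
    have hww : ((z - J) * A⁻¹) * ((z - J) * A⁻¹)ᴴ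
        = A⁻¹ * ((z - J) * ((zᴴ + J) * (Aᴴ)⁻¹)) := by
      rw [hwH, hwc, Matrix.mul_assoc]
    apply congr_posdef hA
    have hcong : A * ((1 : Mn) - ((z - J) * A⁻¹) * ((z - J) * A⁻¹)ᴴ) * Aᴴ
        = I•(zᴴ - z) + I•(zᴴ - z) := by
      rw [Matrix.mul_sub, Matrix.sub_mul, Matrix.mul_one, hww,
        mul_nonsing_inv_cancel_left _ _ hA, ← Matrix.mul_assoc (z - J) (zᴴ + J) (Aᴴ)⁻¹,
        nonsing_inv_mul_cancel_right _ _ hAHu, hAH, hAdef, exp2, exp1, smul_sub]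
      abel
    rw [hcong]
    exact h2.add h2

lemma gf {z : Mn} (h2 : (I • (zᴴ - z)).PosDef) :
    I • (((1 : Mn) + (z - J) * (z + J)⁻¹) * ((1 : Mn) - (z - J) * (z + J)⁻¹)⁻¹) = z := by
  have hA : IsUnit (z + J).det := isUnit_hA h2
  set A := z + J with hAdef
  have hAinv : IsUnit A⁻¹.det := isUnit_nonsing_inv_det _ hA
  have h2I : (2 * Complex.I) ≠ 0 := by simp [Complex.I_ne_zero]
  have : Invertible (2 * Complex.I) := invertibleOfNonzero h2I
  have h1w : (1 : Mn) - (z - J) * A⁻¹ = (2 * I) • A⁻¹ := by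
    calc (1 : Mn) - (z - J) * A⁻¹ = A * A⁻¹ - (z - J) * A⁻¹ := by
          rw [mul_nonsing_inv _ hA]
      _ = (A - (z - J)) * A⁻¹ := by rw [← Matrix.sub_mul]
      _ = ((2 * I) • (1 : Mn)) * A⁻¹ := by
          rw [hAdef]; congr 1; module
      _ = (2 * I) • A⁻¹ := by rw [smul_mul_assoc, one_mul]
  have h2w : (1 : Mn) + (z - J) * A⁻¹ = ((2:ℂ) • z) * A⁻¹ := by
    calc (1 : Mn) + (z - J) * A⁻¹ = A * A⁻¹ + (z - J) * A⁻¹ := by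
          rw [mul_nonsing_inv _ hA]
      _ = (A + (z - J)) * A⁻¹ := by rw [← Matrix.add_mul]
      _ = ((2:ℂ) • z) * A⁻¹ := by rw [hAdef]; congr 1; module
  have hinv : ((1 : Mn) - (z - J) * A⁻¹)⁻¹ = (2 * I)⁻¹ • A := by
    rw [h1w, Matrix.inv_smul A⁻¹ (2 * Complex.I) hAinv, nonsing_inv_nonsing_inv _ hA,
      invOf_eq_inv]
  rw [h2w, hinv]
  simp only [smul_mul_assoc, mul_smul_comm, smul_smul, Matrix.mul_assoc]
  rw [nonsing_inv_mul _ hA, mul_one]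
  rw [show Complex.I * ((2 * Complex.I)⁻¹ * (2:ℂ)) = 1 from by field_simp, one_smul]

lemma isUnit_onePlus {w : Mn} (hsk : wᵀ = -w) (hpd : ((1 : Mn) - w * wᴴ).PosDef) :
    IsUnit ((1 : Mn) + w).det := by
  have hsk' : (-w)ᵀ = -(-w) := by rw [transpose_neg, hsk]
  have hpd' : ((1 : Mn) - (-w) * (-w)ᴴ).PosDef := by
    simpa [conjTranspose_neg] using hpd
  simpa [sub_neg_eq_add] using isUnit_oneSub hsk' hpd'

lemma fg {w : Mn} (hsk : wᵀ = -w) (hpd : ((1 : Mn) - w * wᴴ).PosDef) :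
    ((I • (((1:Mn) + w) * ((1:Mn) - w)⁻¹)) - J) *
      ((I • (((1:Mn) + w) * ((1:Mn) - w)⁻¹)) + J)⁻¹ = w := by
  have hB : IsUnit ((1:Mn) - w).det := isUnit_oneSub hsk hpd
  set B := (1:Mn) - w with hBdef
  have hBinv : IsUnit B⁻¹.det := isUnit_nonsing_inv_det _ hB
  have h2I : (2 * Complex.I) ≠ 0 := by simp [Complex.I_ne_zero]
  have : Invertible (2 * Complex.I) := invertibleOfNonzero h2I
  have e1 : (I • (((1:Mn) + w) * B⁻¹)) - J = (2 * I) • (w * B⁻¹) := by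
    calc (I • (((1:Mn) + w) * B⁻¹)) - J
        = I • (((1:Mn) + w) * B⁻¹) - I • (B * B⁻¹) := by rw [mul_nonsing_inv _ hB]
      _ = I • ((((1:Mn) + w) - B) * B⁻¹) := by rw [← smul_sub, ← Matrix.sub_mul]
      _ = I • (((2:ℂ) • w) * B⁻¹) := by
          congr 2
          rw [hBdef]
          module
      _ = (2 * I) • (w * B⁻¹) := by
          rw [smul_mul_assoc, smul_smul, mul_comm]
  have e2 : (I • (((1:Mn) + w) * B⁻¹)) + J = (2 * I) • B⁻¹ := by
    calc (I • (((1:Mn) + w) * B⁻¹)) + J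
        = I • (((1:Mn) + w) * B⁻¹) + I • (B * B⁻¹) := by rw [mul_nonsing_inv _ hB]
      _ = I • ((((1:Mn) + w) + B) * B⁻¹) := by rw [← smul_add, ← Matrix.add_mul]
      _ = I • (((2:ℂ) • (1:Mn)) * B⁻¹) := by
          congr 2
          rw [hBdef]
          module
      _ = (2 * I) • B⁻¹ := by
          rw [smul_mul_assoc, one_mul, smul_smul, mul_comm]
  rw [e1, e2, Matrix.inv_smul B⁻¹ (2 * Complex.I) hBinv, nonsing_inv_nonsing_inv _ hB,
    invOf_eq_inv,
    smul_mul_assoc, mul_smul_comm, smul_smul, Matrix.mul_assoc,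
    nonsing_inv_mul _ hB, mul_one]
  have hs : 2 * Complex.I * (2 * Complex.I)⁻¹ = 1 := mul_inv_cancel₀ h2I
  rw [hs, one_smul]

lemma bwd {w : Mn} (hsk : wᵀ = -w) (hpd : ((1 : Mn) - w * wᴴ).PosDef) :
    (I • (((1:Mn) + w) * ((1:Mn) - w)⁻¹))ᵀ * (I • (((1:Mn) + w) * ((1:Mn) - w)⁻¹)) + 1 = 0 ∧
    (I • ((I • (((1:Mn) + w) * ((1:Mn) - w)⁻¹))ᴴ - I • (((1:Mn) + w) * ((1:Mn) - w)⁻¹))).PosDef := by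
  have hB1 : IsUnit ((1:Mn) - w).det := isUnit_oneSub hsk hpd
  have hB2 : IsUnit ((1:Mn) + w).det := isUnit_onePlus hsk hpd
  have hcommw : ((1:Mn) - w) * ((1:Mn) + w) = ((1:Mn) + w) * ((1:Mn) - w) := by noncomm_ring
  have ht : (I • (((1:Mn) + w) * ((1:Mn) - w)⁻¹))ᵀ
      = I • (((1:Mn) + w)⁻¹ * ((1:Mn) - w)) := by
    rw [transpose_smul, transpose_mul, transpose_nonsing_inv, transpose_sub, transpose_add,
      transpose_one, hsk, sub_neg_eq_add, ← sub_eq_add_neg]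
  constructor
  · rw [ht, smul_mul_assoc, mul_smul_comm, smul_smul, Complex.I_mul_I]
    have haux : ((1:Mn) - w) * (((1:Mn) + w) * ((1:Mn) - w)⁻¹) = (1:Mn) + w := by
      rw [← Matrix.mul_assoc, hcommw, Matrix.mul_assoc, mul_nonsing_inv _ hB1, mul_one]
    have hmid : ((1:Mn) + w)⁻¹ * ((1:Mn) - w) * (((1:Mn) + w) * ((1:Mn) - w)⁻¹) = 1 := by
      rw [Matrix.mul_assoc, haux, nonsing_inv_mul _ hB2]
    rw [hmid, neg_smul, one_smul, neg_add_cancel]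
  · have hH : (I • (((1:Mn) + w) * ((1:Mn) - w)⁻¹))ᴴ
        = (-I) • (((1:Mn) - wᴴ)⁻¹ * ((1:Mn) + wᴴ)) := by
      rw [conjTranspose_smul, conjTranspose_mul, conjTranspose_nonsing_inv, conjTranspose_sub,
        conjTranspose_add, conjTranspose_one, Complex.star_def, Complex.conj_I]
    have hX : I • ((I • (((1:Mn) + w) * ((1:Mn) - w)⁻¹))ᴴ - I • (((1:Mn) + w) * ((1:Mn) - w)⁻¹))
        = ((1:Mn) - wᴴ)⁻¹ * ((1:Mn) + wᴴ) + ((1:Mn) + w) * ((1:Mn) - w)⁻¹ := by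
      rw [hH, smul_sub, smul_smul, smul_smul, Complex.I_mul_I, mul_neg, Complex.I_mul_I,
        neg_neg, one_smul, neg_smul, one_smul, sub_neg_eq_add]
    rw [hX]
    have hCu : IsUnit ((1:Mn) - wᴴ).det := by
      have : (1:Mn) - wᴴ = ((1:Mn) - w)ᴴ := by rw [conjTranspose_sub, conjTranspose_one]
      rw [this, det_conjTranspose]
      exact hB1.star
    apply congr_posdef hCu
    have hCH : ((1:Mn) - wᴴ)ᴴ = (1:Mn) - w := by
      rw [conjTranspose_sub, conjTranspose_one, conjTranspose_conjTranspose]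
    have expand : ((1:Mn) - wᴴ) * ((((1:Mn) - wᴴ)⁻¹ * ((1:Mn) + wᴴ)) + (((1:Mn) + w) * ((1:Mn) - w)⁻¹)) * ((1:Mn) - wᴴ)ᴴ
        = ((1:Mn) + wᴴ) * ((1:Mn) - w) + ((1:Mn) - wᴴ) * ((1:Mn) + w) := by
      rw [hCH, Matrix.mul_add, Matrix.add_mul, mul_nonsing_inv_cancel_left _ _ hCu,
        Matrix.mul_assoc ((1:Mn) - wᴴ) (((1:Mn) + w) * ((1:Mn) - w)⁻¹) ((1:Mn) - w),
        Matrix.mul_assoc ((1:Mn) + w) ((1:Mn) - w)⁻¹ ((1:Mn) - w),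
        nonsing_inv_mul _ hB1, mul_one]
    rw [expand]
    have hT : ((1 : Mn) - w * wᴴ)ᵀ = 1 - wᴴ * w := by
      have h5 : (wᴴ)ᵀ = -wᴴ := by
        have h6 : (wᴴ)ᵀ = (wᵀ)ᴴ := rfl
        rw [h6, hsk, conjTranspose_neg]
      rw [transpose_sub, transpose_one, transpose_mul, h5, hsk, neg_mul_neg]
    have hpdT : ((1:Mn) - wᴴ * w).PosDef := by
      rw [← hT]
      exact hpd.transpose
    have hfinal : ((1:Mn) + wᴴ) * ((1:Mn) - w) + ((1:Mn) - wᴴ) * ((1:Mn) + w)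
        = ((1:Mn) - wᴴ * w) + ((1:Mn) - wᴴ * w) := by noncomm_ring
    rw [hfinal]
    exact hpdT.add hpdT

end Stmt7Aux

/-- The Cayley transform `z ↦ (z − i·1ₙ)(z + i·1ₙ)⁻¹` is a
bijection from the unbounded domain
`𝔥 = {z ∈ ℂⁿˣⁿ : zᵗz + 1 = 0, i(z* − z) > 0}` onto the bounded domain
`𝔅 = {z ∈ ℂⁿˣⁿ : zᵗ = −z, zz* < 1ₙ}`. -/
theorem stmt7 (n : ℕ) :
    Set.BijOn (fun z : Matrix (Fin n) (Fin n) ℂ =>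
        (z - Complex.I • (1 : Matrix (Fin n) (Fin n) ℂ)) *
          (z + Complex.I • (1 : Matrix (Fin n) (Fin n) ℂ))⁻¹)
      {z : Matrix (Fin n) (Fin n) ℂ |
        zᵀ * z + 1 = 0 ∧ (Complex.I • (zᴴ - z)).PosDef}
      {z : Matrix (Fin n) (Fin n) ℂ |
        zᵀ = -z ∧ (1 - z * zᴴ).PosDef} := by
  apply Set.InvOn.bijOn (f' := fun w : Matrix (Fin n) (Fin n) ℂ =>
      Complex.I • ((1 + w) * (1 - w)⁻¹))
  · constructor
    · intro z hz
      exact Stmt7Aux.gf hz.2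
    · intro w hw
      exact Stmt7Aux.fg hw.1 hw.2
  · intro z hz
    exact Stmt7Aux.fwd hz.1 hz.2
  · intro w hw
    exact Stmt7Aux.bwd hw.1 hw.2
end

section
/- For the action of G on the bounded domain 𝔅 of antisymmetric matrices, one has the transformation rule αz₂ − αz₁ = λ(α,z₁)⁻ᵗ (z₂ − z₁) λ(α,z₂)⁻¹ for z₁, z₂ ∈ 𝔅 and α ∈ G, where λ(α,z) = cz+d. Consequently d(αz) = λ(α,z)⁻ᵗ · dz · λ(α,z)⁻¹. -/
open Matrix
open scoped ComplexOrder

/-- For `α = [[a,b],[c,d]]` in the group `G''` acting on the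
bounded domain `𝔅` of antisymmetric matrices (`G''` preserves both
`diag(1ₙ,−1ₙ)` hermitian-wise and `ψ'' = [[0,−i],[−i,0]]` transpose-wise,
by `αz = (az+b)(cz+d)⁻¹`), one has the transformation rule
`αz₂ − αz₁ = ᵗλ(α,z₁)⁻¹ (z₂ − z₁) λ(α,z₂)⁻¹` with `λ(α,z) = cz + d`. -/
theorem stmt9 (n : ℕ) (a b c d : Matrix (Fin n) (Fin n) ℂ)
    (hφ : (Matrix.fromBlocks a b c d)ᴴ *
        Matrix.fromBlocks (1 : Matrix (Fin n) (Fin n) ℂ) 0 0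
          (-(1 : Matrix (Fin n) (Fin n) ℂ)) *
        Matrix.fromBlocks a b c d =
      Matrix.fromBlocks (1 : Matrix (Fin n) (Fin n) ℂ) 0 0
        (-(1 : Matrix (Fin n) (Fin n) ℂ)))
    (hψ : (Matrix.fromBlocks a b c d)ᵀ *
        Matrix.fromBlocks 0 (-(Complex.I • (1 : Matrix (Fin n) (Fin n) ℂ)))
          (-(Complex.I • (1 : Matrix (Fin n) (Fin n) ℂ))) 0 *
        Matrix.fromBlocks a b c d =
      Matrix.fromBlocks 0 (-(Complex.I • (1 : Matrix (Fin n) (Fin n) ℂ)))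
        (-(Complex.I • (1 : Matrix (Fin n) (Fin n) ℂ))) 0)
    (z₁ z₂ : Matrix (Fin n) (Fin n) ℂ)
    (hz₁ : z₁ᵀ = -z₁ ∧ (1 - z₁ * z₁ᴴ).PosDef)
    (hz₂ : z₂ᵀ = -z₂ ∧ (1 - z₂ * z₂ᴴ).PosDef)
    (hu₁ : IsUnit (c * z₁ + d)) (hu₂ : IsUnit (c * z₂ + d)) :
    (a * z₂ + b) * (c * z₂ + d)⁻¹ - (a * z₁ + b) * (c * z₁ + d)⁻¹ =
      ((c * z₁ + d)ᵀ)⁻¹ * (z₂ - z₁) * (c * z₂ + d)⁻¹ := by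
  -- extract block relations from hψ
  rw [Matrix.fromBlocks_transpose, Matrix.fromBlocks_multiply,
    Matrix.fromBlocks_multiply, Matrix.fromBlocks_inj] at hψ
  obtain ⟨h11, h12, h21, h22⟩ := hψ
  have hI : (Complex.I : ℂ) ≠ 0 := Complex.I_ne_zero
  have hinj : Function.Injective (fun m : Matrix (Fin n) (Fin n) ℂ => Complex.I • m) :=
    smul_right_injective _ hI
  have e11 : cᵀ * a + aᵀ * c = 0 := by
    have := h11
    simp only [Matrix.mul_zero, Matrix.zero_mul, mul_neg, neg_mul, Matrix.mul_smul,
      Matrix.smul_mul, Matrix.mul_one, Matrix.one_mul, zero_add, add_zero] at this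
    refine hinj ?_
    show Complex.I • (cᵀ * a + aᵀ * c) = Complex.I • (0 : Matrix (Fin n) (Fin n) ℂ)
    rw [smul_add, smul_zero]; linear_combination (norm := abel) -this
  have e12 : cᵀ * b + aᵀ * d = 1 := by
    have := h12
    simp only [Matrix.mul_zero, Matrix.zero_mul, mul_neg, neg_mul, Matrix.mul_smul,
      Matrix.smul_mul, Matrix.mul_one, Matrix.one_mul, zero_add, add_zero] at this
    refine hinj ?_
    show Complex.I • (cᵀ * b + aᵀ * d) = Complex.I • (1 : Matrix (Fin n) (Fin n) ℂ)
    rw [smul_add]; linear_combination (norm := abel) -this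
  have e21 : dᵀ * a + bᵀ * c = 1 := by
    have := h21
    simp only [Matrix.mul_zero, Matrix.zero_mul, mul_neg, neg_mul, Matrix.mul_smul,
      Matrix.smul_mul, Matrix.mul_one, Matrix.one_mul, zero_add, add_zero] at this
    refine hinj ?_
    show Complex.I • (dᵀ * a + bᵀ * c) = Complex.I • (1 : Matrix (Fin n) (Fin n) ℂ)
    rw [smul_add]; linear_combination (norm := abel) -this
  have e22 : dᵀ * b + bᵀ * d = 0 := by
    have := h22
    simp only [Matrix.mul_zero, Matrix.zero_mul, mul_neg, neg_mul, Matrix.mul_smul,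
      Matrix.smul_mul, Matrix.mul_one, Matrix.one_mul, zero_add, add_zero] at this
    refine hinj ?_
    show Complex.I • (dᵀ * b + bᵀ * d) = Complex.I • (0 : Matrix (Fin n) (Fin n) ℂ)
    rw [smul_add, smul_zero]; linear_combination (norm := abel) -this
  -- key bilinear identity
  have key : ∀ w₁ w₂ : Matrix (Fin n) (Fin n) ℂ, w₁ᵀ = -w₁ →
      (c * w₁ + d)ᵀ * (a * w₂ + b) + (a * w₁ + b)ᵀ * (c * w₂ + d) = w₂ - w₁ := by
    intro w₁ w₂ hw₁
    have expand : (c * w₁ + d)ᵀ * (a * w₂ + b) + (a * w₁ + b)ᵀ * (c * w₂ + d)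
        = w₁ᵀ * (cᵀ * a + aᵀ * c) * w₂ + w₁ᵀ * (cᵀ * b + aᵀ * d)
          + (dᵀ * a + bᵀ * c) * w₂ + (dᵀ * b + bᵀ * d) := by
      simp only [Matrix.transpose_add, Matrix.transpose_mul]
      noncomm_ring
    rw [expand, e11, e12, e21, e22, hw₁]
    noncomm_ring
  have key1 : (c * z₁ + d)ᵀ * (a * z₁ + b) = -((a * z₁ + b)ᵀ * (c * z₁ + d)) := by
    have h := key z₁ z₁ hz₁.1
    rw [sub_self] at h
    exact eq_neg_of_add_eq_zero_left h
  -- invertibility facts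
  have hd₁ : IsUnit (c * z₁ + d).det := (Matrix.isUnit_iff_isUnit_det _).mp hu₁
  have hd₂ : IsUnit (c * z₂ + d).det := (Matrix.isUnit_iff_isUnit_det _).mp hu₂
  have h1 : (c * z₂ + d)⁻¹ * (c * z₂ + d) = 1 := Matrix.nonsing_inv_mul _ hd₂
  have h2 : (c * z₁ + d) * (c * z₁ + d)⁻¹ = 1 := Matrix.mul_nonsing_inv _ hd₁
  have h3 : ((c * z₁ + d)ᵀ)⁻¹ * (c * z₁ + d)ᵀ = 1 :=
    Matrix.nonsing_inv_mul _ (by rwa [Matrix.det_transpose])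
  have h4 : (c * z₂ + d) * (c * z₂ + d)⁻¹ = 1 := Matrix.mul_nonsing_inv _ hd₂
  set D := (a * z₂ + b) * (c * z₂ + d)⁻¹ - (a * z₁ + b) * (c * z₁ + d)⁻¹ with hD
  have main : (c * z₁ + d)ᵀ * D * (c * z₂ + d) = z₂ - z₁ := by
    calc (c * z₁ + d)ᵀ * D * (c * z₂ + d)
        = (c * z₁ + d)ᵀ * (a * z₂ + b) * ((c * z₂ + d)⁻¹ * (c * z₂ + d))
          - ((c * z₁ + d)ᵀ * (a * z₁ + b)) * ((c * z₁ + d)⁻¹ * (c * z₂ + d)) := by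
          rw [hD]; noncomm_ring
      _ = (c * z₁ + d)ᵀ * (a * z₂ + b)
          + (a * z₁ + b)ᵀ * (((c * z₁ + d) * (c * z₁ + d)⁻¹) * (c * z₂ + d)) := by
          rw [h1, key1, Matrix.mul_one]; noncomm_ring
      _ = (c * z₁ + d)ᵀ * (a * z₂ + b) + (a * z₁ + b)ᵀ * (c * z₂ + d) := by
          rw [h2, Matrix.one_mul]
      _ = z₂ - z₁ := key z₁ z₂ hz₁.1
  calc D = (((c * z₁ + d)ᵀ)⁻¹ * (c * z₁ + d)ᵀ) * D * ((c * z₂ + d) * (c * z₂ + d)⁻¹) := by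
        rw [h3, h4, Matrix.one_mul, Matrix.mul_one]
    _ = ((c * z₁ + d)ᵀ)⁻¹ * ((c * z₁ + d)ᵀ * D * (c * z₂ + d)) * (c * z₂ + d)⁻¹ := by
        noncomm_ring
    _ = ((c * z₁ + d)ᵀ)⁻¹ * (z₂ - z₁) * (c * z₂ + d)⁻¹ := by rw [main]
end

section
/- Let Y = K₁ × ⋯ × Kₙ be a product of imaginary quadratic fields (a CM algebra) with involution ρ given by complex conjugation on each factor, and Y¹ = {y ∈ Y : y·yᵖ = 1}. Then Y is spanned by Y¹ over Q; in particular there exists β ∈ Y¹ such that Y = Q[β] and the 2n components β₁,…,βₙ, β₁ᵖ,…,βₙᵖ (under embeddings into C) are pairwise distinct. -/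
set_option maxHeartbeats 1000000 in
/-- Let `Y = K₁ × ⋯ × Kₙ` be a product of imaginary quadratic
fields (realized as subfields of ℂ, stable under complex conjugation), with
involution `ρ` given by complex conjugation on each factor, and
`Y¹ = {y ∈ Y : y·yᵖ = 1}`.  Then `Y` is spanned by `Y¹` over ℚ; in
particular there exists `β ∈ Y¹` with `Y = ℚ[β]` and such that the `2n`
numbers `β₁, …, βₙ, β₁ᵖ, …, βₙᵖ` are pairwise distinct. -/
theorem stmt13 (n : ℕ) (K : Fin n → Subfield ℂ)
    (hdim : ∀ i, Module.finrank ℚ (K i) = 2)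
    (him : ∀ i, ∃ x ∈ K i, Complex.im x ≠ 0)
    (hconj : ∀ i, ∀ x ∈ K i, (starRingEnd ℂ) x ∈ K i) :
    Submodule.span ℚ
        {y : ∀ i, K i | ∀ i, (y i : ℂ) * (starRingEnd ℂ) (y i : ℂ) = 1} =
      (⊤ : Submodule ℚ (∀ i, K i)) ∧
    ∃ β : ∀ i, K i,
      (∀ i, (β i : ℂ) * (starRingEnd ℂ) (β i : ℂ) = 1) ∧
      Algebra.adjoin ℚ ({β} : Set (∀ i, K i)) = ⊤ ∧
      Function.Injective
        (Sum.elim (fun i : Fin n => (β i : ℂ))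
          (fun i : Fin n => (starRingEnd ℂ) (β i : ℂ))) := by
  classical
  -- Step 1: purely imaginary elements with positive imaginary part
  have hs' : ∀ i, ∃ s : ℂ, s ∈ K i ∧ s.re = 0 ∧ 0 < s.im := by
    intro i
    obtain ⟨x, hx, hxim⟩ := him i
    rcases lt_or_gt_of_ne hxim with h | h
    · exact ⟨(starRingEnd ℂ) x - x, sub_mem (hconj i x hx) hx, by simp, by simp; linarith⟩
    · exact ⟨x - (starRingEnd ℂ) x, sub_mem hx (hconj i x hx), by simp, by simp; linarith⟩
  choose s hsK hsre hsim using hs'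
  -- Step 2: rational numbers a i
  have ha' : ∀ i : Fin n, ∃ q : ℚ,
      (s i).im / (((i:ℕ):ℝ) + 2) < q ∧ (q:ℝ) < (s i).im / (((i:ℕ):ℝ) + 1) := by
    intro i
    apply exists_rat_btwn
    have h0 : (0:ℝ) ≤ ((i:ℕ):ℝ) := Nat.cast_nonneg _
    exact div_lt_div_of_pos_left (hsim i) (by linarith) (by linarith)
  choose a ha1 ha2 using ha'
  have hapos : ∀ i, (0:ℝ) < (a i : ℝ) := by
    intro i
    have h0 : (0:ℝ) ≤ ((i:ℕ):ℝ) := Nat.cast_nonneg _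
    have : (0:ℝ) < (s i).im / (((i:ℕ):ℝ) + 2) := div_pos (hsim i) (by linarith)
    linarith [ha1 i]
  -- bounds on t i = (s i).im / a i
  have ht1 : ∀ i : Fin n, (((i:ℕ):ℝ) + 1) * (a i : ℝ) < (s i).im := by
    intro i
    have h0 : (0:ℝ) ≤ ((i:ℕ):ℝ) := Nat.cast_nonneg _
    have := ha2 i
    rw [lt_div_iff₀ (by linarith)] at this
    linarith
  have ht2 : ∀ i : Fin n, (s i).im < (((i:ℕ):ℝ) + 2) * (a i : ℝ) := by
    intro i
    have h0 : (0:ℝ) ≤ ((i:ℕ):ℝ) := Nat.cast_nonneg _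
    have := ha1 i
    rw [div_lt_iff₀ (by linarith)] at this
    linarith
  -- key injectivity on ratios
  have hkey : ∀ i j : Fin n, (a j : ℝ) * (s i).im = (a i : ℝ) * (s j).im → i = j := by
    intro i j hij
    have h1 := ht1 i; have h2 := ht2 i; have h3 := ht1 j; have h4 := ht2 j
    have hai := hapos i; have haj := hapos j
    have hij1 : ((i:ℕ):ℝ) < ((j:ℕ):ℝ) + 1 := by
      nlinarith [mul_pos hai haj, mul_lt_mul_of_pos_right h1 haj,
        mul_lt_mul_of_pos_right h4 hai]
    have hij2 : ((j:ℕ):ℝ) < ((i:ℕ):ℝ) + 1 := by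
      nlinarith [mul_pos hai haj, mul_lt_mul_of_pos_right h3 hai,
        mul_lt_mul_of_pos_right h2 haj]
    have : (i:ℕ) = (j:ℕ) := by
      have := (by exact_mod_cast hij1 : (i:ℕ) < (j:ℕ) + 1)
      have := (by exact_mod_cast hij2 : (j:ℕ) < (i:ℕ) + 1)
      omega
    exact Fin.ext this
  -- Step 3: the numbers b i
  set b : Fin n → ℂ := fun i => (((a i : ℚ):ℂ) + s i) / (((a i : ℚ):ℂ) - s i) with hb
  have hden : ∀ i, ((a i : ℚ):ℂ) - s i ≠ 0 := by
    intro i h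
    have := congrArg Complex.im h
    simp at this
    linarith [hsim i]
  have hnum : ∀ i, ((a i : ℚ):ℂ) + s i ≠ 0 := by
    intro i h
    have := congrArg Complex.im h
    simp at this
    linarith [hsim i]
  have hmem : ∀ i, b i ∈ K i := fun i =>
    div_mem (add_mem (SubfieldClass.ratCast_mem (K i) (a i)) (hsK i))
      (sub_mem (SubfieldClass.ratCast_mem (K i) (a i)) (hsK i))
  have hconjs : ∀ i, (starRingEnd ℂ) (s i) = -(s i) := by
    intro i
    apply Complex.ext <;> simp [hsre i]
  have hconjb : ∀ i, (starRingEnd ℂ) (b i) = (((a i : ℚ):ℂ) - s i) / (((a i : ℚ):ℂ) + s i) := by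
    intro i
    rw [hb]
    simp only [map_div₀, map_add, map_sub, map_ratCast, hconjs i]
    ring_nf
  have hnorm : ∀ i, b i * (starRingEnd ℂ) (b i) = 1 := by
    intro i
    rw [hconjb i, hb]
    simp only
    rw [div_mul_div_comm, div_eq_one_iff_eq (mul_ne_zero (hden i) (hnum i))]
    ring
  have himb : ∀ i, 0 < (b i).im := by
    intro i
    have hn : 0 < Complex.normSq (((a i : ℚ):ℂ) - s i) := Complex.normSq_pos.mpr (hden i)
    rw [hb]
    simp only
    rw [Complex.div_im, div_sub_div_same]
    apply div_pos _ hn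
    simp only [Complex.add_im, Complex.add_re, Complex.sub_im, Complex.sub_re,
      Complex.ratCast_im, Complex.ratCast_re, hsre i]
    nlinarith [hapos i, hsim i]
  have hbinj : ∀ i j, b i = b j → i = j := by
    intro i j h
    rw [hb] at h
    simp only at h
    rw [div_eq_div_iff (hden i) (hden j)] at h
    have him2 := congrArg Complex.im h
    simp only [Complex.mul_im, Complex.add_re, Complex.add_im, Complex.sub_re, Complex.sub_im,
      Complex.ratCast_im, Complex.ratCast_re, hsre i, hsre j] at him2
    apply hkey i j
    nlinarith [him2]
  -- β
  set β : ∀ i, K i := fun i => (⟨b i, hmem i⟩ : K i) with hβ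
  have hβcoe : ∀ i, (β i : ℂ) = b i := fun i => rfl
  have hβnorm : ∀ i, (β i : ℂ) * (starRingEnd ℂ) (β i : ℂ) = 1 := fun i => hnorm i
  -- injectivity of the 2n values
  have hinj : Function.Injective
      (Sum.elim (fun i : Fin n => (β i : ℂ)) (fun i : Fin n => (starRingEnd ℂ) (β i : ℂ))) := by
    rintro (x | x) (y | y) h <;> simp only [Sum.elim_inl, Sum.elim_inr, hβcoe] at h
    · exact congrArg Sum.inl (hbinj x y h)
    · exfalso
      have : (b x).im = -((b y).im) := by
        have := congrArg Complex.im h; simpa using this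
      linarith [himb x, himb y]
    · exfalso
      have : -((b x).im) = (b y).im := by
        have := congrArg Complex.im h; simpa using this
      linarith [himb x, himb y]
    · exact congrArg Sum.inr (hbinj x y ((starRingEnd ℂ).injective h))
  -- Step 4: linear algebra
  haveI : ∀ i, FiniteDimensional ℚ (K i) := fun i => FiniteDimensional.of_finrank_eq_succ (hdim i)
  have hfr : Module.finrank ℚ (∀ i, K i) = n + n := by
    rw [Module.finrank_pi_fintype]
    simp [hdim]
    omega
  set N := n + n with hN
  set w : Fin N → ℂ := fun k =>
    Sum.elim (fun i : Fin n => (β i : ℂ)) (fun i : Fin n => (starRingEnd ℂ) (β i : ℂ))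
      (finSumFinEquiv.symm k) with hw
  have hwinj : Function.Injective w := hinj.comp finSumFinEquiv.symm.injective
  have hvdm : LinearIndependent ℂ (fun k : Fin N => fun j : Fin N => w j ^ (k : ℕ)) := by
    have hdet : (Matrix.vandermonde w).det ≠ 0 := Matrix.det_vandermonde_ne_zero_iff.mpr hwinj
    have h2 := Matrix.linearIndependent_cols_iff_isUnit.mpr
      ((Matrix.isUnit_iff_isUnit_det _).mpr hdet.isUnit)
    have h3 : (fun k : Fin N => fun j : Fin N => w j ^ (k : ℕ)) =
        fun k : Fin N => (Matrix.vandermonde w).transpose k := by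
      funext k j
      simp [Matrix.transpose_apply, Matrix.vandermonde_apply]
    rw [h3]
    exact h2
  have hvdmQ : LinearIndependent ℚ (fun k : Fin N => fun j : Fin N => w j ^ (k : ℕ)) := by
    apply hvdm.restrict_scalars
    intro p q hpq
    have : ((p:ℂ)) = ((q:ℂ)) := by simpa using hpq
    exact_mod_cast this
  -- the linear map ψ
  set coeK : ∀ i, (K i) →ₗ[ℚ] ℂ := fun i => ((K i).subtype.toRatAlgHom).toLinearMap with hcoeK
  set conjL : ℂ →ₗ[ℚ] ℂ := ((starRingEnd ℂ : ℂ →+* ℂ).toRatAlgHom).toLinearMap with hconjL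
  set ψ : (∀ i, K i) →ₗ[ℚ] (Fin N → ℂ) :=
    LinearMap.pi (fun k =>
      Sum.elim (fun i : Fin n => (coeK i).comp (LinearMap.proj i))
        (fun i : Fin n => (conjL.comp (coeK i)).comp (LinearMap.proj i))
        (finSumFinEquiv.symm k)) with hψ
  have hψpow : ∀ k : Fin N, ψ (β ^ (k:ℕ)) = fun j : Fin N => w j ^ (k:ℕ) := by
    intro k
    funext j
    rw [hψ, hw]
    rw [LinearMap.pi_apply]
    rcases hj : finSumFinEquiv.symm j with i | i <;>
      simp [hj, hcoeK, hconjL, Pi.pow_apply, RingHom.toRatAlgHom, ← map_pow, hβcoe]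
  have hli : LinearIndependent ℚ (fun k : Fin N => β ^ (k:ℕ)) := by
    apply LinearIndependent.of_comp ψ
    have : (ψ ∘ fun k : Fin N => β ^ (k:ℕ)) = fun k : Fin N => fun j : Fin N => w j ^ (k:ℕ) := by
      funext k; exact hψpow k
    rw [this]
    exact hvdmQ
  have hspan : Submodule.span ℚ (Set.range fun k : Fin N => β ^ (k:ℕ)) = ⊤ :=
    hli.span_eq_top_of_card_eq_finrank' (by simp [hfr])
  -- powers are in Y¹
  have hpow_mem : ∀ k : ℕ, (β ^ k) ∈
      {y : ∀ i, K i | ∀ i, (y i : ℂ) * (starRingEnd ℂ) (y i : ℂ) = 1} := by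
    intro k i
    have : ((β ^ k) i : ℂ) = (β i : ℂ) ^ k := by
      push_cast [Pi.pow_apply]
      ring
    rw [this, map_pow, ← mul_pow, hβnorm i, one_pow]
  refine ⟨?_, β, hβnorm, ?_, hinj⟩
  · rw [eq_top_iff, ← hspan]
    apply Submodule.span_mono
    rintro _ ⟨k, rfl⟩
    exact hpow_mem (k:ℕ)
  · rw [← Algebra.toSubmodule_eq_top, eq_top_iff, ← hspan]
    rw [Submodule.span_le]
    rintro _ ⟨k, rfl⟩
    exact Subalgebra.pow_mem _ (Algebra.self_mem_adjoin_singleton ℚ β) _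
end

section
/- Let Vₜ = τₜ(Gₙ × Gₙ)τₜ⁻¹ ∩ P_N. Then Vₜ = {β×γ ∈ Pₙᵗ × Pₙᵗ : κₜ·πₜ(β) = πₜ(γ)·κₜ}, where Pₙᵗ is the t-Klingen parabolic of Gₙ, πₜ: Pₙᵗ → G_{2t+r} is the natural projection, and κₜ = [[0,0,−1ₜ],[0,1ᵣ,0],[1ₜ,0,0]]. -/
open Quaternion Matrix

section
variable {B : Type} [Ring B]

/-- Assemble a 3×3 block matrix with block sizes `(m, r, m')`. -/
def b3 {m r m' : ℕ}
    (A11 : Matrix (Fin m) (Fin m) B) (A12 : Matrix (Fin m) (Fin r) B)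
    (A13 : Matrix (Fin m) (Fin m') B)
    (A21 : Matrix (Fin r) (Fin m) B) (A22 : Matrix (Fin r) (Fin r) B)
    (A23 : Matrix (Fin r) (Fin m') B)
    (A31 : Matrix (Fin m') (Fin m) B) (A32 : Matrix (Fin m') (Fin r) B)
    (A33 : Matrix (Fin m') (Fin m') B) :
    Matrix (Fin m ⊕ (Fin r ⊕ Fin m')) (Fin m ⊕ (Fin r ⊕ Fin m')) B :=
  Matrix.fromBlocks A11 (Matrix.fromCols A12 A13)
    (Matrix.fromRows A21 A31) (Matrix.fromBlocks A22 A23 A32 A33)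

end

/-- The splitting `B ⊗ ℝ ≅ M₂(ℂ)` of the definite quaternion algebra
`B = ℍ[ℚ,a,b]` (`a, b < 0`), used to define the reduced norm. -/
noncomputable def qSplit (a b : ℚ) (x : ℍ[ℚ, a, b]) :
    Matrix (Fin 2) (Fin 2) ℂ :=
  !![(x.re : ℂ) + (x.imJ : ℂ) * (Real.sqrt (-b) * Complex.I),
     (a : ℂ) * ((x.imI : ℂ) - (x.imK : ℂ) * (Real.sqrt (-b) * Complex.I));
     (x.imI : ℂ) + (x.imK : ℂ) * (Real.sqrt (-b) * Complex.I),
     (x.re : ℂ) - (x.imJ : ℂ) * (Real.sqrt (-b) * Complex.I)]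

/-- Entrywise extension `Mₙ(B) → M₂ₙ(ℂ)`; `det ∘ toC` is the reduced
norm. -/
noncomputable def toC {a b : ℚ} {I : Type} (M : Matrix I I ℍ[ℚ, a, b]) :
    Matrix (I × Fin 2) (I × Fin 2) ℂ :=
  Matrix.of fun p q => qSplit a b (M p.1 q.1) p.2 q.2

/-- The generator `ζ` of `B = ℍ[ℚ,a,b]` with `ζ² = a`. -/
def zetaB (a b : ℚ) : ℍ[ℚ, a, b] := ⟨0, 1, 0, 0⟩

/-- The skew-hermitian form `φ = [[0,0,−1ₘ],[0,ζ·1ᵣ,0],[1ₘ,0,0]]`. -/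
def phiQ (m r : ℕ) (a b : ℚ) :
    Matrix (Fin m ⊕ (Fin r ⊕ Fin m)) (Fin m ⊕ (Fin r ⊕ Fin m)) ℍ[ℚ, a, b] :=
  b3 0 0 (-1) 0 (Matrix.diagonal fun _ => zetaB a b) 0 1 0 0

/-- `Gₙ = {g ∈ SLₙ(B) : g*φg = φ}` (reduced norm one). -/
noncomputable def GnQ (m r : ℕ) (a b : ℚ) :
    Set (Matrix (Fin m ⊕ (Fin r ⊕ Fin m)) (Fin m ⊕ (Fin r ⊕ Fin m))
      ℍ[ℚ, a, b]) :=
  {g | gᴴ * phiQ m r a b * g = phiQ m r a b ∧ (toC g).det = 1}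

/-- `G_N = {g ∈ GL_N(B) : g*J_{N/2}g = J_{N/2}}`. -/
def GNQ (m r : ℕ) (a b : ℚ) :
    Set (Matrix ((Fin m ⊕ (Fin r ⊕ Fin m)) ⊕ (Fin m ⊕ (Fin r ⊕ Fin m)))
      ((Fin m ⊕ (Fin r ⊕ Fin m)) ⊕ (Fin m ⊕ (Fin r ⊕ Fin m))) ℍ[ℚ, a, b]) :=
  {g | IsUnit g ∧
    gᴴ * Matrix.fromBlocks 0 (-1) 1 0 * g = Matrix.fromBlocks 0 (-1) 1 0}

/-- The Siegel parabolic `P_N ⊆ G_N`. -/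
def PNQ (m r : ℕ) (a b : ℚ) :
    Set (Matrix ((Fin m ⊕ (Fin r ⊕ Fin m)) ⊕ (Fin m ⊕ (Fin r ⊕ Fin m)))
      ((Fin m ⊕ (Fin r ⊕ Fin m)) ⊕ (Fin m ⊕ (Fin r ⊕ Fin m))) ℍ[ℚ, a, b]) :=
  {g | g ∈ GNQ m r a b ∧ g.toBlocks₂₁ = 0}

/-- The explicit matrix `R` of the doubling embedding. -/
def Rdbl (m r : ℕ) (a b : ℚ) :
    Matrix ((Fin m ⊕ (Fin r ⊕ Fin m)) ⊕ (Fin m ⊕ (Fin r ⊕ Fin m)))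
      ((Fin m ⊕ (Fin r ⊕ Fin m)) ⊕ (Fin m ⊕ (Fin r ⊕ Fin m))) ℍ[ℚ, a, b] :=
  Matrix.fromBlocks
    (b3 1 0 0 0 ((1/2 : ℚ) • 1) 0 0 0 0)
    (b3 0 0 0 0 (-(Matrix.diagonal fun _ => a⁻¹ • zetaB a b)) 0 1 0 0)
    (b3 0 0 (-1) 0 (-((1/2 : ℚ) • 1)) 0 0 0 0)
    (b3 0 0 0 0 (-(Matrix.diagonal fun _ => a⁻¹ • zetaB a b)) 0 0 0 1)

/-- The doubling embedding `ρ(g₁ × g₂) = R⁻¹ diag(g₁,g₂) R`. -/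
def rhoD (m r : ℕ) (a b : ℚ)
    (Rinv : Matrix ((Fin m ⊕ (Fin r ⊕ Fin m)) ⊕ (Fin m ⊕ (Fin r ⊕ Fin m)))
      ((Fin m ⊕ (Fin r ⊕ Fin m)) ⊕ (Fin m ⊕ (Fin r ⊕ Fin m))) ℍ[ℚ, a, b])
    (g₁ g₂ : Matrix (Fin m ⊕ (Fin r ⊕ Fin m)) (Fin m ⊕ (Fin r ⊕ Fin m))
      ℍ[ℚ, a, b]) :
    Matrix ((Fin m ⊕ (Fin r ⊕ Fin m)) ⊕ (Fin m ⊕ (Fin r ⊕ Fin m)))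
      ((Fin m ⊕ (Fin r ⊕ Fin m)) ⊕ (Fin m ⊕ (Fin r ⊕ Fin m))) ℍ[ℚ, a, b] :=
  Rinv * Matrix.fromBlocks g₁ 0 0 g₂ * Rdbl m r a b

/-- The matrix `eₜ = diag(1ₜ, 0) ∈ Bᵐˣᵐ`. -/
def eT (m : ℕ) (a b : ℚ) (t : ℕ) : Matrix (Fin m) (Fin m) ℍ[ℚ, a, b] :=
  Matrix.of fun i j => if i = j ∧ (i : ℕ) < t then 1 else 0

/-- The representative `τₜ ∈ G_N`. -/
def tauT (m r : ℕ) (a b : ℚ) (t : ℕ) :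
    Matrix ((Fin m ⊕ (Fin r ⊕ Fin m)) ⊕ (Fin m ⊕ (Fin r ⊕ Fin m)))
      ((Fin m ⊕ (Fin r ⊕ Fin m)) ⊕ (Fin m ⊕ (Fin r ⊕ Fin m))) ℍ[ℚ, a, b] :=
  Matrix.fromBlocks 1 0
    (b3 0 0 (eT m a b t) 0 0 0 ((eT m a b t)ᴴ) 0 0) 1

/-- Row (resp. column) membership in the fifth block (second copy of `m`,
index `≥ t`) of the decomposition `(t, m−t, r, t, m−t)`. -/
def inBlk5 {m r : ℕ} (t : ℕ) : Fin m ⊕ (Fin r ⊕ Fin m) → Prop :=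
  fun p => match p with
  | Sum.inr (Sum.inr i) => t ≤ (i : ℕ)
  | _ => False

/-- Membership in the second block (first copy of `m`, index `≥ t`). -/
def inBlk2 {m r : ℕ} (t : ℕ) : Fin m ⊕ (Fin r ⊕ Fin m) → Prop :=
  fun p => match p with
  | Sum.inl i => t ≤ (i : ℕ)
  | _ => False

/-- The `t`-Klingen parabolic `Pₙᵗ ⊆ Gₙ`: the blocks
`a₂, g₂, h₂, h₃, h₄, l₂, d₃` of the `(t, m−t, r, t, m−t)` block
decomposition vanish. -/
noncomputable def PntQ (m r : ℕ) (a b : ℚ) (t : ℕ) :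
    Set (Matrix (Fin m ⊕ (Fin r ⊕ Fin m)) (Fin m ⊕ (Fin r ⊕ Fin m))
      ℍ[ℚ, a, b]) :=
  {g | g ∈ GnQ m r a b ∧
    (∀ p q, inBlk5 t p → ¬ inBlk5 t q → g p q = 0) ∧
    (∀ p q, ¬ inBlk2 t p → ¬ inBlk5 t p → inBlk2 t q → g p q = 0)}

/-- The projection `πₜ : Pₙᵗ → G_{2t+r}`, extracting the blocks
`(a₁,b₁,c₁; g₁,e,f₁; h₁,l₁,d₁)`. -/
def piT (m r : ℕ) (a b : ℚ) (t : ℕ) (ht : t ≤ m)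
    (g : Matrix (Fin m ⊕ (Fin r ⊕ Fin m)) (Fin m ⊕ (Fin r ⊕ Fin m))
      ℍ[ℚ, a, b]) :
    Matrix (Fin t ⊕ (Fin r ⊕ Fin t)) (Fin t ⊕ (Fin r ⊕ Fin t)) ℍ[ℚ, a, b] :=
  Matrix.of fun p q =>
    g (Sum.elim (fun i => Sum.inl (Fin.castLE ht i))
        (Sum.elim (fun j => Sum.inr (Sum.inl j))
          (fun i => Sum.inr (Sum.inr (Fin.castLE ht i)))) p)
      (Sum.elim (fun i => Sum.inl (Fin.castLE ht i))
        (Sum.elim (fun j => Sum.inr (Sum.inl j))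
          (fun i => Sum.inr (Sum.inr (Fin.castLE ht i)))) q)

/-- `κₜ = [[0,0,−1ₜ],[0,1ᵣ,0],[1ₜ,0,0]]`. -/
def kappaT (r : ℕ) (a b : ℚ) (t : ℕ) :
    Matrix (Fin t ⊕ (Fin r ⊕ Fin t)) (Fin t ⊕ (Fin r ⊕ Fin t)) ℍ[ℚ, a, b] :=
  b3 0 0 (-1) 0 1 0 1 0 0

section
set_option linter.unusedSectionVars false
variable {B : Type} [Ring B]
variable {m r m' : ℕ}

@[simp] lemma b3_apply_11 (A11 A12 A13 A21 A22 A23 A31 A32 A33) (i : Fin m) (j : Fin m) :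
    (b3 (B := B) (m := m) (r := r) (m' := m') A11 A12 A13 A21 A22 A23 A31 A32 A33)
      (Sum.inl i) (Sum.inl j) = A11 i j := rfl

@[simp] lemma b3_apply_12 (A11 A12 A13 A21 A22 A23 A31 A32 A33) (i : Fin m) (j : Fin r) :
    (b3 (B := B) (m := m) (r := r) (m' := m') A11 A12 A13 A21 A22 A23 A31 A32 A33)
      (Sum.inl i) (Sum.inr (Sum.inl j)) = A12 i j := rfl

@[simp] lemma b3_apply_13 (A11 A12 A13 A21 A22 A23 A31 A32 A33) (i : Fin m) (j : Fin m') :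
    (b3 (B := B) (m := m) (r := r) (m' := m') A11 A12 A13 A21 A22 A23 A31 A32 A33)
      (Sum.inl i) (Sum.inr (Sum.inr j)) = A13 i j := rfl

@[simp] lemma b3_apply_21 (A11 A12 A13 A21 A22 A23 A31 A32 A33) (i : Fin r) (j : Fin m) :
    (b3 (B := B) (m := m) (r := r) (m' := m') A11 A12 A13 A21 A22 A23 A31 A32 A33)
      (Sum.inr (Sum.inl i)) (Sum.inl j) = A21 i j := rfl

@[simp] lemma b3_apply_22 (A11 A12 A13 A21 A22 A23 A31 A32 A33) (i : Fin r) (j : Fin r) :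
    (b3 (B := B) (m := m) (r := r) (m' := m') A11 A12 A13 A21 A22 A23 A31 A32 A33)
      (Sum.inr (Sum.inl i)) (Sum.inr (Sum.inl j)) = A22 i j := rfl

@[simp] lemma b3_apply_23 (A11 A12 A13 A21 A22 A23 A31 A32 A33) (i : Fin r) (j : Fin m') :
    (b3 (B := B) (m := m) (r := r) (m' := m') A11 A12 A13 A21 A22 A23 A31 A32 A33)
      (Sum.inr (Sum.inl i)) (Sum.inr (Sum.inr j)) = A23 i j := rfl

@[simp] lemma b3_apply_31 (A11 A12 A13 A21 A22 A23 A31 A32 A33) (i : Fin m') (j : Fin m) :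
    (b3 (B := B) (m := m) (r := r) (m' := m') A11 A12 A13 A21 A22 A23 A31 A32 A33)
      (Sum.inr (Sum.inr i)) (Sum.inl j) = A31 i j := rfl

@[simp] lemma b3_apply_32 (A11 A12 A13 A21 A22 A23 A31 A32 A33) (i : Fin m') (j : Fin r) :
    (b3 (B := B) (m := m) (r := r) (m' := m') A11 A12 A13 A21 A22 A23 A31 A32 A33)
      (Sum.inr (Sum.inr i)) (Sum.inr (Sum.inl j)) = A32 i j := rfl

@[simp] lemma b3_apply_33 (A11 A12 A13 A21 A22 A23 A31 A32 A33) (i : Fin m') (j : Fin m') :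
    (b3 (B := B) (m := m) (r := r) (m' := m') A11 A12 A13 A21 A22 A23 A31 A32 A33)
      (Sum.inr (Sum.inr i)) (Sum.inr (Sum.inr j)) = A33 i j := rfl

lemma b3_mul (A11 A12 A13 A21 A22 A23 A31 A32 A33 C11 C12 C13 C21 C22 C23 C31 C32 C33) :
    (b3 (B := B) (m := m) (r := r) (m' := m') A11 A12 A13 A21 A22 A23 A31 A32 A33) *
      b3 C11 C12 C13 C21 C22 C23 C31 C32 C33 =
    b3 (A11*C11 + A12*C21 + A13*C31) (A11*C12 + A12*C22 + A13*C32) (A11*C13 + A12*C23 + A13*C33)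
       (A21*C11 + A22*C21 + A23*C31) (A21*C12 + A22*C22 + A23*C32) (A21*C13 + A22*C23 + A23*C33)
       (A31*C11 + A32*C21 + A33*C31) (A31*C12 + A32*C22 + A33*C32) (A31*C13 + A32*C23 + A33*C33)
    := by
  ext (i | j | k) (i' | j' | k') <;>
    simp [mul_apply, Fintype.sum_sum_type, Finset.sum_add_distrib, add_assoc]

lemma b3_add (A11 A12 A13 A21 A22 A23 A31 A32 A33 C11 C12 C13 C21 C22 C23 C31 C32 C33) :
    (b3 (B := B) (m := m) (r := r) (m' := m') A11 A12 A13 A21 A22 A23 A31 A32 A33) +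
      b3 C11 C12 C13 C21 C22 C23 C31 C32 C33 =
    b3 (A11+C11) (A12+C12) (A13+C13) (A21+C21) (A22+C22) (A23+C23) (A31+C31) (A32+C32) (A33+C33)
    := by
  ext (i | j | k) (i' | j' | k') <;> simp

lemma b3_neg (A11 A12 A13 A21 A22 A23 A31 A32 A33) :
    -(b3 (B := B) (m := m) (r := r) (m' := m') A11 A12 A13 A21 A22 A23 A31 A32 A33) =
    b3 (-A11) (-A12) (-A13) (-A21) (-A22) (-A23) (-A31) (-A32) (-A33) := by
  ext (i | j | k) (i' | j' | k') <;> simp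

lemma b3_zero : (b3 (B := B) (m := m) (r := r) (m' := m') 0 0 0 0 0 0 0 0 0) = 0 := by
  ext (i | j | k) (i' | j' | k') <;> simp

lemma b3_one : (b3 (B := B) (m := m) (r := r) (m' := m') 1 0 0 0 1 0 0 0 1) = 1 := by
  ext (i | j | k) (i' | j' | k') <;> simp [one_apply]

lemma b3_conjT [StarRing B] (A11 A12 A13 A21 A22 A23 A31 A32 A33) :
    (b3 (B := B) (m := m) (r := r) (m' := m') A11 A12 A13 A21 A22 A23 A31 A32 A33)ᴴ =
    b3 A11ᴴ A21ᴴ A31ᴴ A12ᴴ A22ᴴ A32ᴴ A13ᴴ A23ᴴ A33ᴴ := by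
  ext (i | j | k) (i' | j' | k') <;> simp [conjTranspose_apply]

lemma b3_inj {A11 A12 A13 A21 A22 A23 A31 A32 A33 C11 C12 C13 C21 C22 C23 C31 C32 C33}
    (h : (b3 (B := B) (m := m) (r := r) (m' := m') A11 A12 A13 A21 A22 A23 A31 A32 A33) =
      b3 C11 C12 C13 C21 C22 C23 C31 C32 C33) :
    A11 = C11 ∧ A12 = C12 ∧ A13 = C13 ∧ A21 = C21 ∧ A22 = C22 ∧ A23 = C23 ∧
      A31 = C31 ∧ A32 = C32 ∧ A33 = C33 := by
  refine ⟨?_, ?_, ?_, ?_, ?_, ?_, ?_, ?_, ?_⟩ <;> ext i j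
  · exact congrFun (congrFun h (Sum.inl i)) (Sum.inl j)
  · exact congrFun (congrFun h (Sum.inl i)) (Sum.inr (Sum.inl j))
  · exact congrFun (congrFun h (Sum.inl i)) (Sum.inr (Sum.inr j))
  · exact congrFun (congrFun h (Sum.inr (Sum.inl i))) (Sum.inl j)
  · exact congrFun (congrFun h (Sum.inr (Sum.inl i))) (Sum.inr (Sum.inl j))
  · exact congrFun (congrFun h (Sum.inr (Sum.inl i))) (Sum.inr (Sum.inr j))
  · exact congrFun (congrFun h (Sum.inr (Sum.inr i))) (Sum.inl j)
  · exact congrFun (congrFun h (Sum.inr (Sum.inr i))) (Sum.inr (Sum.inl j))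
  · exact congrFun (congrFun h (Sum.inr (Sum.inr i))) (Sum.inr (Sum.inr j))

lemma eq_b3_parts (g : Matrix (Fin m ⊕ (Fin r ⊕ Fin m')) (Fin m ⊕ (Fin r ⊕ Fin m')) B) :
    g = b3 (Matrix.of fun i j => g (.inl i) (.inl j))
      (Matrix.of fun i j => g (.inl i) (.inr (.inl j)))
      (Matrix.of fun i j => g (.inl i) (.inr (.inr j)))
      (Matrix.of fun i j => g (.inr (.inl i)) (.inl j))
      (Matrix.of fun i j => g (.inr (.inl i)) (.inr (.inl j)))
      (Matrix.of fun i j => g (.inr (.inl i)) (.inr (.inr j)))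
      (Matrix.of fun i j => g (.inr (.inr i)) (.inl j))
      (Matrix.of fun i j => g (.inr (.inr i)) (.inr (.inl j)))
      (Matrix.of fun i j => g (.inr (.inr i)) (.inr (.inr j))) := by
  ext (i | j | k) (i' | j' | k') <;> rfl

end

section
set_option linter.unusedSectionVars false
variable {m r : ℕ} {a b : ℚ} {t : ℕ}

lemma zeta_mul_k (ha : a ≠ 0) : zetaB a b * (a⁻¹ • zetaB a b) = 1 := by
  ext <;> simp [zetaB, QuaternionAlgebra.smul_mk] <;> field_simp

lemma k_mul_zeta (ha : a ≠ 0) : (a⁻¹ • zetaB a b) * zetaB a b = 1 := by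
  ext <;> simp [zetaB, QuaternionAlgebra.smul_mk] <;> field_simp

lemma star_zeta : star (zetaB a b) = - zetaB a b := by
  ext <;> simp [zetaB]

lemma eT_mul_apply (M : Matrix (Fin m) (Fin n) ℍ[ℚ, a, b]) (i j) :
    (eT m a b t * M) i j = if (i : ℕ) < t then M i j else 0 := by
  by_cases h : (i : ℕ) < t <;>
    simp [eT, mul_apply, h, Finset.sum_ite_eq, ite_and]

lemma mul_eT_apply (M : Matrix (Fin n) (Fin m) ℍ[ℚ, a, b]) (i j) :
    (M * eT m a b t) i j = if (j : ℕ) < t then M i j else 0 := by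
  have : ∀ k : Fin m, (eT m a b t) k j = if k = j ∧ (j : ℕ) < t then 1 else 0 := by
    intro k
    by_cases hkj : k = j
    · subst hkj; rfl
    · simp [eT, hkj]
  by_cases h : (j : ℕ) < t <;>
    simp [mul_apply, this, h, Finset.sum_ite_eq', ite_and]

lemma eT_conjT : (eT m a b t)ᴴ = eT m a b t := by
  refine Matrix.ext fun i j => ?_
  rw [conjTranspose_apply]
  by_cases h : i = j
  · subst h; by_cases h2 : (i : ℕ) < t <;> simp [eT, h2]
  · simp [eT, h, Ne.symm h]

lemma Dz_mul_Dk (ha : a ≠ 0) :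
    (diagonal fun _ : Fin r => zetaB a b) * (diagonal fun _ : Fin r => a⁻¹ • zetaB a b) = 1 := by
  rw [diagonal_mul_diagonal]
  simp [zeta_mul_k ha]

lemma Dk_mul_Dz (ha : a ≠ 0) :
    (diagonal fun _ : Fin r => a⁻¹ • zetaB a b) * (diagonal fun _ : Fin r => zetaB a b) = 1 := by
  rw [diagonal_mul_diagonal]
  simp [k_mul_zeta ha]

lemma starDz : (diagonal fun _ : Fin r => zetaB a b)ᴴ = -(diagonal fun _ : Fin r => zetaB a b) := by
  simp [diagonal_conjTranspose, star_zeta, Pi.star_def]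

end


section
set_option linter.unusedSectionVars false
set_option maxHeartbeats 1600000

variable {B : Type} [Ring B] {m r m' : ℕ}

lemma b3_congr {A11 A12 A13 A21 A22 A23 A31 A32 A33 C11 C12 C13 C21 C22 C23 C31 C32 C33}
    (h11 : A11 = C11) (h12 : A12 = C12) (h13 : A13 = C13) (h21 : A21 = C21)
    (h22 : A22 = C22) (h23 : A23 = C23) (h31 : A31 = C31) (h32 : A32 = C32)
    (h33 : A33 = C33) :
    (b3 (B := B) (m := m) (r := r) (m' := m') A11 A12 A13 A21 A22 A23 A31 A32 A33) =
      b3 C11 C12 C13 C21 C22 C23 C31 C32 C33 := by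
  rw [h11, h12, h13, h21, h22, h23, h31, h32, h33]

def p11 (g : Matrix (Fin m ⊕ (Fin r ⊕ Fin m')) (Fin m ⊕ (Fin r ⊕ Fin m')) B) :
    Matrix (Fin m) (Fin m) B := Matrix.of fun i j => g (.inl i) (.inl j)
def p12 (g : Matrix (Fin m ⊕ (Fin r ⊕ Fin m')) (Fin m ⊕ (Fin r ⊕ Fin m')) B) :
    Matrix (Fin m) (Fin r) B := Matrix.of fun i j => g (.inl i) (.inr (.inl j))
def p13 (g : Matrix (Fin m ⊕ (Fin r ⊕ Fin m')) (Fin m ⊕ (Fin r ⊕ Fin m')) B) :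
    Matrix (Fin m) (Fin m') B := Matrix.of fun i j => g (.inl i) (.inr (.inr j))
def p21 (g : Matrix (Fin m ⊕ (Fin r ⊕ Fin m')) (Fin m ⊕ (Fin r ⊕ Fin m')) B) :
    Matrix (Fin r) (Fin m) B := Matrix.of fun i j => g (.inr (.inl i)) (.inl j)
def p22 (g : Matrix (Fin m ⊕ (Fin r ⊕ Fin m')) (Fin m ⊕ (Fin r ⊕ Fin m')) B) :
    Matrix (Fin r) (Fin r) B := Matrix.of fun i j => g (.inr (.inl i)) (.inr (.inl j))
def p23 (g : Matrix (Fin m ⊕ (Fin r ⊕ Fin m')) (Fin m ⊕ (Fin r ⊕ Fin m')) B) :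
    Matrix (Fin r) (Fin m') B := Matrix.of fun i j => g (.inr (.inl i)) (.inr (.inr j))
def p31 (g : Matrix (Fin m ⊕ (Fin r ⊕ Fin m')) (Fin m ⊕ (Fin r ⊕ Fin m')) B) :
    Matrix (Fin m') (Fin m) B := Matrix.of fun i j => g (.inr (.inr i)) (.inl j)
def p32 (g : Matrix (Fin m ⊕ (Fin r ⊕ Fin m')) (Fin m ⊕ (Fin r ⊕ Fin m')) B) :
    Matrix (Fin m') (Fin r) B := Matrix.of fun i j => g (.inr (.inr i)) (.inr (.inl j))
def p33 (g : Matrix (Fin m ⊕ (Fin r ⊕ Fin m')) (Fin m ⊕ (Fin r ⊕ Fin m')) B) :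
    Matrix (Fin m') (Fin m') B := Matrix.of fun i j => g (.inr (.inr i)) (.inr (.inr j))

lemma eq_b3_p (g : Matrix (Fin m ⊕ (Fin r ⊕ Fin m')) (Fin m ⊕ (Fin r ⊕ Fin m')) B) :
    g = b3 (p11 g) (p12 g) (p13 g) (p21 g) (p22 g) (p23 g) (p31 g) (p32 g) (p33 g) := by
  ext (i | j | k) (i' | j' | k') <;> rfl

end

section
set_option linter.unusedSectionVars false
set_option maxHeartbeats 1600000

variable {m r t : ℕ} {a b : ℚ}

lemma half_add_half {V : Type*} [AddCommMonoid V] [Module ℚ V] (x : V) :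
    (1/2 : ℚ) • x + (1/2 : ℚ) • x = x := by
  rw [← add_smul]; norm_num

/-- explicit inverse of `Rdbl` -/
def RinvC (m r : ℕ) (a b : ℚ) :
    Matrix ((Fin m ⊕ (Fin r ⊕ Fin m)) ⊕ (Fin m ⊕ (Fin r ⊕ Fin m)))
      ((Fin m ⊕ (Fin r ⊕ Fin m)) ⊕ (Fin m ⊕ (Fin r ⊕ Fin m))) ℍ[ℚ, a, b] :=
  Matrix.fromBlocks
    (b3 1 0 0 0 1 0 0 0 0)
    (b3 0 0 0 0 (-1) 0 (-1) 0 0)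
    (b3 0 0 1 0 (-((1/2 : ℚ) • (Matrix.diagonal fun _ => zetaB a b))) 0 0 0 0)
    (b3 0 0 0 0 (-((1/2 : ℚ) • (Matrix.diagonal fun _ => zetaB a b))) 0 0 0 1)

lemma Rdbl_mul_RinvC (ha : a ≠ 0) : Rdbl m r a b * RinvC m r a b = 1 := by
  rw [Rdbl, RinvC, Matrix.fromBlocks_multiply]
  simp only [b3_mul, Matrix.zero_mul, Matrix.mul_zero, Matrix.one_mul, Matrix.mul_one,
    add_zero, zero_add, Matrix.neg_mul, Matrix.mul_neg, neg_neg, neg_zero,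
    smul_mul_assoc, mul_smul_comm, smul_smul, Dz_mul_Dk ha, Dk_mul_Dz ha,
    b3_add, b3_neg, smul_neg]
  norm_num
  simp only [half_add_half, b3_zero, b3_one, Matrix.fromBlocks_one]

lemma RinvC_mul_Rdbl (ha : a ≠ 0) : RinvC m r a b * Rdbl m r a b = 1 := by
  rw [Rdbl, RinvC, Matrix.fromBlocks_multiply]
  simp only [b3_mul, Matrix.zero_mul, Matrix.mul_zero, Matrix.one_mul, Matrix.mul_one,
    add_zero, zero_add, Matrix.neg_mul, Matrix.mul_neg, neg_neg, neg_zero,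
    smul_mul_assoc, mul_smul_comm, smul_smul, Dz_mul_Dk ha, Dk_mul_Dz ha,
    b3_add, b3_neg, smul_neg]
  norm_num
  simp only [half_add_half, b3_zero, b3_one, Matrix.fromBlocks_one]

/-- explicit inverse of `tauT` -/
def tauInvC (m r : ℕ) (a b : ℚ) (t : ℕ) :
    Matrix ((Fin m ⊕ (Fin r ⊕ Fin m)) ⊕ (Fin m ⊕ (Fin r ⊕ Fin m)))
      ((Fin m ⊕ (Fin r ⊕ Fin m)) ⊕ (Fin m ⊕ (Fin r ⊕ Fin m))) ℍ[ℚ, a, b] :=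
  Matrix.fromBlocks 1 0 (-(b3 0 0 (eT m a b t) 0 0 0 (eT m a b t) 0 0)) 1

lemma tauT_eq : tauT m r a b t =
    Matrix.fromBlocks 1 0 (b3 0 0 (eT m a b t) 0 0 0 (eT m a b t) 0 0) 1 := by
  rw [tauT, eT_conjT]

lemma tauT_mul_tauInvC : tauT m r a b t * tauInvC m r a b t = 1 := by
  rw [tauT_eq, tauInvC, Matrix.fromBlocks_multiply]
  simp only [Matrix.one_mul, Matrix.mul_one, Matrix.mul_zero, Matrix.zero_mul,
    add_zero, zero_add, Matrix.mul_neg, add_neg_cancel, neg_zero, Matrix.fromBlocks_one]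

lemma Zcomp (β γ : Matrix (Fin m ⊕ (Fin r ⊕ Fin m)) (Fin m ⊕ (Fin r ⊕ Fin m)) ℍ[ℚ, a, b]) :
    (tauT m r a b t * (RinvC m r a b * Matrix.fromBlocks β 0 0 γ * Rdbl m r a b) *
      tauInvC m r a b t).toBlocks₂₁ =
    b3 (p31 β + eT m a b t * (p13 γ * eT m a b t))
       ((1/2 : ℚ) • (eT m a b t * p12 γ) + (1/2 : ℚ) • p32 β)
       (eT m a b t * p11 γ - p33 β * eT m a b t)
       ((1/2 : ℚ) • ((Matrix.diagonal fun _ => zetaB a b) * (p23 γ * eT m a b t)) -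
         (1/2 : ℚ) • ((Matrix.diagonal fun _ => zetaB a b) * p21 β))
       ((1/4 : ℚ) • ((Matrix.diagonal fun _ => zetaB a b) * p22 γ) -
         (1/4 : ℚ) • ((Matrix.diagonal fun _ => zetaB a b) * p22 β))
       ((1/2 : ℚ) • ((Matrix.diagonal fun _ => zetaB a b) * p21 γ) +
         (1/2 : ℚ) • ((Matrix.diagonal fun _ => zetaB a b) * (p23 β * eT m a b t)))
       (eT m a b t * p11 β - p33 γ * eT m a b t)
       ((1/2 : ℚ) • (eT m a b t * p12 β) - (1/2 : ℚ) • p32 γ)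
       (-(p31 γ) - eT m a b t * (p13 β * eT m a b t)) := by
  conv_lhs => rw [eq_b3_p β, eq_b3_p γ]
  rw [tauT_eq, RinvC, Rdbl, tauInvC]
  simp only [Matrix.fromBlocks_multiply, Matrix.toBlocks_fromBlocks₂₁, b3_mul, b3_add,
    b3_neg, Matrix.zero_mul, Matrix.mul_zero, Matrix.one_mul, Matrix.mul_one,
    add_zero, zero_add, Matrix.neg_mul, Matrix.mul_neg, neg_neg, neg_zero,
    smul_mul_assoc, mul_smul_comm, Matrix.mul_smul, Matrix.smul_mul, smul_smul,
    Matrix.mul_assoc, smul_neg, smul_zero, Matrix.mul_add, Matrix.add_mul]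
  have hC : ∀ {n : Type} [Fintype n] (X : Matrix (Fin r) (Fin r) ℍ[ℚ, a, b])
      (Y : Matrix (Fin r) n ℍ[ℚ, a, b]),
      @HMul.hMul (Matrix (Fin r) (Fin r) ℍ[ℚ, a, b]) (Matrix (Fin r) n ℍ[ℚ, a, b])
        (Matrix (Fin r) n ℍ[ℚ, a, b]) CStarMatrix.instHMulOfFintypeOfMulOfAddCommMonoid X Y =
        X * Y := fun _ _ => rfl
  simp only [hC]
  refine b3_congr ?_ ?_ ?_ ?_ ?_ ?_ ?_ ?_ ?_ <;> module
end



section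
set_option linter.unusedSectionVars false
variable {B : Type} [Ring B] {m r m' : ℕ}

lemma b3_eq_zero_iff {A11 A12 A13 A21 A22 A23 A31 A32 A33} :
    (b3 (B := B) (m := m) (r := r) (m' := m') A11 A12 A13 A21 A22 A23 A31 A32 A33) = 0 ↔
    (A11 = 0 ∧ A12 = 0 ∧ A13 = 0 ∧ A21 = 0 ∧ A22 = 0 ∧ A23 = 0 ∧
      A31 = 0 ∧ A32 = 0 ∧ A33 = 0) := by
  constructor
  · intro h
    exact b3_inj (h.trans b3_zero.symm)
  · rintro ⟨h1, h2, h3, h4, h5, h6, h7, h8, h9⟩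
    rw [b3_congr h1 h2 h3 h4 h5 h6 h7 h8 h9, b3_zero]

end

section
set_option linter.unusedSectionVars false
set_option maxHeartbeats 1600000

variable {m r t : ℕ} {a b : ℚ}

@[simp] lemma inBlk5_inl (i : Fin m) : inBlk5 (r := r) t (Sum.inl i) ↔ False := Iff.rfl
@[simp] lemma inBlk5_inrl (j : Fin r) : inBlk5 (m := m) t (Sum.inr (Sum.inl j)) ↔ False := Iff.rfl
@[simp] lemma inBlk5_inrr (i : Fin m) : inBlk5 (r := r) t (Sum.inr (Sum.inr i)) ↔ t ≤ (i : ℕ) := Iff.rfl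
@[simp] lemma inBlk2_inl (i : Fin m) : inBlk2 (r := r) t (Sum.inl i) ↔ t ≤ (i : ℕ) := Iff.rfl
@[simp] lemma inBlk2_inrl (j : Fin r) : inBlk2 (m := m) t (Sum.inr (Sum.inl j)) ↔ False := Iff.rfl
@[simp] lemma inBlk2_inrr (i : Fin m) : inBlk2 (r := r) t (Sum.inr (Sum.inr i)) ↔ False := Iff.rfl

lemma qsmul_zero_iff {V : Type*} [AddCommGroup V] [Module ℚ V] {c : ℚ} (hc : c ≠ 0)
    {x : V} : c • x = 0 ↔ x = 0 := by
  constructor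
  · intro h
    have := congrArg (fun y => c⁻¹ • y) h
    simpa [smul_smul, inv_mul_cancel₀ hc] using this
  · rintro rfl; simp

lemma Dz_mul_zero_iff (ha : a ≠ 0) {n : ℕ} {M : Matrix (Fin r) (Fin n) ℍ[ℚ, a, b]} :
    (Matrix.diagonal fun _ : Fin r => zetaB a b) * M = 0 ↔ M = 0 := by
  constructor
  · intro h
    calc M = ((Matrix.diagonal fun _ : Fin r => a⁻¹ • zetaB a b) *
          (Matrix.diagonal fun _ : Fin r => zetaB a b)) * M := by rw [Dk_mul_Dz ha, Matrix.one_mul]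
      _ = 0 := by rw [Matrix.mul_assoc, h, Matrix.mul_zero]
  · rintro rfl; simp

variable (M : Matrix (Fin t ⊕ (Fin r ⊕ Fin t)) (Fin t ⊕ (Fin r ⊕ Fin t)) ℍ[ℚ, a, b])

lemma kappa_mul_apply_1 (i : Fin t) (q) :
    (kappaT r a b t * M) (Sum.inl i) q = -(M (Sum.inr (Sum.inr i)) q) := by
  simp [kappaT, mul_apply, Fintype.sum_sum_type, one_apply, ite_mul,
    Finset.sum_ite_eq, Finset.sum_ite_eq']

lemma kappa_mul_apply_2 (j : Fin r) (q) :
    (kappaT r a b t * M) (Sum.inr (Sum.inl j)) q = M (Sum.inr (Sum.inl j)) q := by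
  simp [kappaT, mul_apply, Fintype.sum_sum_type, one_apply, ite_mul,
    Finset.sum_ite_eq, Finset.sum_ite_eq']

lemma kappa_mul_apply_3 (i : Fin t) (q) :
    (kappaT r a b t * M) (Sum.inr (Sum.inr i)) q = M (Sum.inl i) q := by
  simp [kappaT, mul_apply, Fintype.sum_sum_type, one_apply, ite_mul,
    Finset.sum_ite_eq, Finset.sum_ite_eq']

lemma mul_kappa_apply_1 (p) (i : Fin t) :
    (M * kappaT r a b t) p (Sum.inl i) = M p (Sum.inr (Sum.inr i)) := by
  simp [kappaT, mul_apply, Fintype.sum_sum_type, one_apply, mul_ite,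
    Finset.sum_ite_eq, Finset.sum_ite_eq']

lemma mul_kappa_apply_2 (p) (j : Fin r) :
    (M * kappaT r a b t) p (Sum.inr (Sum.inl j)) = M p (Sum.inr (Sum.inl j)) := by
  simp [kappaT, mul_apply, Fintype.sum_sum_type, one_apply, mul_ite,
    Finset.sum_ite_eq, Finset.sum_ite_eq']

lemma mul_kappa_apply_3 (p) (i : Fin t) :
    (M * kappaT r a b t) p (Sum.inr (Sum.inr i)) = -(M p (Sum.inl i)) := by
  simp [kappaT, mul_apply, Fintype.sum_sum_type, one_apply, mul_ite,
    Finset.sum_ite_eq, Finset.sum_ite_eq']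

end


section
set_option linter.unusedSectionVars false
set_option maxHeartbeats 3200000

variable {m r t : ℕ} {a b : ℚ}

lemma main_iff (ha : a ≠ 0) (ht : t ≤ m)
    (β γ : Matrix (Fin m ⊕ (Fin r ⊕ Fin m)) (Fin m ⊕ (Fin r ⊕ Fin m)) ℍ[ℚ, a, b]) :
    b3 (p31 β + eT m a b t * (p13 γ * eT m a b t))
       ((1/2 : ℚ) • (eT m a b t * p12 γ) + (1/2 : ℚ) • p32 β)
       (eT m a b t * p11 γ - p33 β * eT m a b t)
       ((1/2 : ℚ) • ((Matrix.diagonal fun _ => zetaB a b) * (p23 γ * eT m a b t)) -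
         (1/2 : ℚ) • ((Matrix.diagonal fun _ => zetaB a b) * p21 β))
       ((1/4 : ℚ) • ((Matrix.diagonal fun _ => zetaB a b) * p22 γ) -
         (1/4 : ℚ) • ((Matrix.diagonal fun _ => zetaB a b) * p22 β))
       ((1/2 : ℚ) • ((Matrix.diagonal fun _ => zetaB a b) * p21 γ) +
         (1/2 : ℚ) • ((Matrix.diagonal fun _ => zetaB a b) * (p23 β * eT m a b t)))
       (eT m a b t * p11 β - p33 γ * eT m a b t)
       ((1/2 : ℚ) • (eT m a b t * p12 β) - (1/2 : ℚ) • p32 γ)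
       (-(p31 γ) - eT m a b t * (p13 β * eT m a b t)) = 0 ↔
    ((∀ p q, inBlk5 t p → ¬ inBlk5 t q → β p q = 0) ∧
     (∀ p q, ¬ inBlk2 t p → ¬ inBlk5 t p → inBlk2 t q → β p q = 0) ∧
     (∀ p q, inBlk5 t p → ¬ inBlk5 t q → γ p q = 0) ∧
     (∀ p q, ¬ inBlk2 t p → ¬ inBlk5 t p → inBlk2 t q → γ p q = 0) ∧
     kappaT r a b t * piT m r a b t ht β = piT m r a b t ht γ * kappaT r a b t) := by
  have h2 : (1/2 : ℚ) ≠ 0 := by norm_num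
  have h4 : (1/4 : ℚ) ≠ 0 := by norm_num
  rw [b3_eq_zero_iff]
  rw [← smul_add, qsmul_zero_iff h2]
  rw [show ((1/2 : ℚ) • ((Matrix.diagonal fun _ => zetaB a b) * (p23 γ * eT m a b t)) -
      (1/2 : ℚ) • ((Matrix.diagonal fun _ => zetaB a b) * p21 β)) =
      (1/2 : ℚ) • ((Matrix.diagonal fun _ : Fin r => zetaB a b) * (p23 γ * eT m a b t - p21 β))
      from by rw [Matrix.mul_sub, smul_sub]; rfl]
  rw [qsmul_zero_iff h2, Dz_mul_zero_iff ha]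
  rw [show ((1/4 : ℚ) • ((Matrix.diagonal fun _ => zetaB a b) * p22 γ) -
      (1/4 : ℚ) • ((Matrix.diagonal fun _ => zetaB a b) * p22 β)) =
      (1/4 : ℚ) • ((Matrix.diagonal fun _ : Fin r => zetaB a b) * (p22 γ - p22 β))
      from by rw [Matrix.mul_sub, smul_sub]]
  rw [qsmul_zero_iff h4, Dz_mul_zero_iff ha]
  rw [show ((1/2 : ℚ) • ((Matrix.diagonal fun _ => zetaB a b) * p21 γ) +
      (1/2 : ℚ) • ((Matrix.diagonal fun _ => zetaB a b) * (p23 β * eT m a b t))) =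
      (1/2 : ℚ) • ((Matrix.diagonal fun _ : Fin r => zetaB a b) * (p21 γ + p23 β * eT m a b t))
      from by rw [Matrix.mul_add, smul_add]; rfl]
  rw [qsmul_zero_iff h2, Dz_mul_zero_iff ha]
  rw [← smul_sub, qsmul_zero_iff h2]
  constructor
  · rintro ⟨z1, z2, z3, z4, z5, z6, z7, z8, z9⟩
    have E1 : ∀ (i j : Fin m), β (Sum.inr (Sum.inr i)) (Sum.inl j) +
        (if (i:ℕ) < t then (if (j:ℕ) < t then γ (Sum.inl i) (Sum.inr (Sum.inr j)) else 0) else 0) = 0 :=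
      fun i j => by
        have := congrFun (congrFun z1 i) j
        simpa [Matrix.add_apply, eT_mul_apply, mul_eT_apply, p31, p13] using this
    have E2 : ∀ (i : Fin m) (j : Fin r),
        (if (i:ℕ) < t then γ (Sum.inl i) (Sum.inr (Sum.inl j)) else 0) +
          β (Sum.inr (Sum.inr i)) (Sum.inr (Sum.inl j)) = 0 :=
      fun i j => by
        have := congrFun (congrFun z2 i) j
        simpa [Matrix.add_apply, eT_mul_apply, p12, p32] using this
    have E3 : ∀ (i j : Fin m),
        (if (i:ℕ) < t then γ (Sum.inl i) (Sum.inl j) else 0) -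
          (if (j:ℕ) < t then β (Sum.inr (Sum.inr i)) (Sum.inr (Sum.inr j)) else 0) = 0 :=
      fun i j => by
        have := congrFun (congrFun z3 i) j
        simpa [Matrix.sub_apply, eT_mul_apply, mul_eT_apply, p11, p33] using this
    have E4 : ∀ (i : Fin r) (j : Fin m),
        (if (j:ℕ) < t then γ (Sum.inr (Sum.inl i)) (Sum.inr (Sum.inr j)) else 0) -
          β (Sum.inr (Sum.inl i)) (Sum.inl j) = 0 :=
      fun i j => by
        have := congrFun (congrFun z4 i) j
        simpa [Matrix.sub_apply, mul_eT_apply, p23, p21] using this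
    have E5 : ∀ (i j : Fin r),
        γ (Sum.inr (Sum.inl i)) (Sum.inr (Sum.inl j)) -
          β (Sum.inr (Sum.inl i)) (Sum.inr (Sum.inl j)) = 0 :=
      fun i j => by
        have := congrFun (congrFun z5 i) j
        simpa [Matrix.sub_apply, p22] using this
    have E6 : ∀ (i : Fin r) (j : Fin m),
        γ (Sum.inr (Sum.inl i)) (Sum.inl j) +
          (if (j:ℕ) < t then β (Sum.inr (Sum.inl i)) (Sum.inr (Sum.inr j)) else 0) = 0 :=
      fun i j => by
        have := congrFun (congrFun z6 i) j
        simpa [Matrix.add_apply, mul_eT_apply, p21, p23] using this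
    have E7 : ∀ (i j : Fin m),
        (if (i:ℕ) < t then β (Sum.inl i) (Sum.inl j) else 0) -
          (if (j:ℕ) < t then γ (Sum.inr (Sum.inr i)) (Sum.inr (Sum.inr j)) else 0) = 0 :=
      fun i j => by
        have := congrFun (congrFun z7 i) j
        simpa [Matrix.sub_apply, eT_mul_apply, mul_eT_apply, p11, p33] using this
    have E8 : ∀ (i : Fin m) (j : Fin r),
        (if (i:ℕ) < t then β (Sum.inl i) (Sum.inr (Sum.inl j)) else 0) -
          γ (Sum.inr (Sum.inr i)) (Sum.inr (Sum.inl j)) = 0 :=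
      fun i j => by
        have := congrFun (congrFun z8 i) j
        simpa [Matrix.sub_apply, eT_mul_apply, p12, p32] using this
    have E9 : ∀ (i j : Fin m), -(γ (Sum.inr (Sum.inr i)) (Sum.inl j)) -
        (if (i:ℕ) < t then (if (j:ℕ) < t then β (Sum.inl i) (Sum.inr (Sum.inr j)) else 0) else 0) = 0 :=
      fun i j => by
        have := congrFun (congrFun z9 i) j
        simpa [Matrix.sub_apply, Matrix.neg_apply, eT_mul_apply, mul_eT_apply, p31, p13] using this
    refine ⟨?_, ?_, ?_, ?_, ?_⟩
    · rintro (i | j | i) q h5 hq5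
      · simp at h5
      · simp at h5
      · simp only [inBlk5_inrr] at h5
        rcases q with j | j | j
        · simpa [not_lt.mpr h5] using E1 i j
        · simpa [not_lt.mpr h5] using E2 i j
        · simp only [inBlk5_inrr, not_le] at hq5
          have := E3 i j
          simp [not_lt.mpr h5, hq5, sub_eq_zero] at this
          first | exact this | exact this.symm
    · rintro (i | j | i) q h2' h5' hq2
      · rcases q with j | j | j
        · simp only [inBlk2_inl] at hq2
          simp only [inBlk2_inl, not_le] at h2'
          have := E7 i j
          simpa [h2', not_lt.mpr hq2] using this
        · simp at hq2
        · simp at hq2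
      · rcases q with j' | j' | j'
        · simp only [inBlk2_inl] at hq2
          have := E4 j j'
          simpa [not_lt.mpr hq2, sub_eq_zero] using this.symm
        · simp at hq2
        · simp at hq2
      · rcases q with j | j | j
        · simp only [inBlk2_inl] at hq2
          have := E1 i j
          simpa [not_lt.mpr hq2] using this
        · simp at hq2
        · simp at hq2
    · rintro (i | j | i) q h5 hq5
      · simp at h5
      · simp at h5
      · simp only [inBlk5_inrr] at h5
        rcases q with j | j | j
        · have := E9 i j
          simpa [not_lt.mpr h5, sub_eq_zero, neg_eq_zero] using this
        · have := E8 i j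
          simpa [not_lt.mpr h5, sub_eq_zero] using this.symm
        · simp only [inBlk5_inrr, not_le] at hq5
          have := E7 i j
          simpa [not_lt.mpr h5, hq5, sub_eq_zero, eq_comm] using this
    · rintro (i | j | i) q h2' h5' hq2
      · rcases q with j | j | j
        · simp only [inBlk2_inl] at hq2
          simp only [inBlk2_inl, not_le] at h2'
          have := E3 i j
          simpa [h2', not_lt.mpr hq2] using this
        · simp at hq2
        · simp at hq2
      · rcases q with j' | j' | j'
        · simp only [inBlk2_inl] at hq2
          have := E6 j j'
          simpa [not_lt.mpr hq2] using this
        · simp at hq2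
        · simp at hq2
      · rcases q with j | j | j
        · simp only [inBlk2_inl] at hq2
          simp only [inBlk5_inrr, not_le] at h5'
          have := E9 i j
          simpa [not_lt.mpr hq2, neg_eq_zero] using this
        · simp at hq2
        · simp at hq2
    · refine Matrix.ext fun p q => ?_
      rcases p with i | j | i <;> rcases q with i' | j' | i'
      · rw [kappa_mul_apply_1, mul_kappa_apply_1]
        simp only [piT, Matrix.of_apply, Sum.elim_inl, Sum.elim_inr]
        have := E1 (Fin.castLE ht i) (Fin.castLE ht i')
        simp only [Fin.coe_castLE, i.isLt, i'.isLt, if_true] at this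
        first
          | linear_combination (norm := module) this
          | linear_combination (norm := module) -this
      · rw [kappa_mul_apply_1, mul_kappa_apply_2]
        simp only [piT, Matrix.of_apply, Sum.elim_inl, Sum.elim_inr]
        have := E2 (Fin.castLE ht i) j'
        simp only [Fin.coe_castLE, i.isLt, if_true] at this
        first
          | linear_combination (norm := module) this
          | linear_combination (norm := module) -this
      · rw [kappa_mul_apply_1, mul_kappa_apply_3]
        simp only [piT, Matrix.of_apply, Sum.elim_inl, Sum.elim_inr]
        have := E3 (Fin.castLE ht i) (Fin.castLE ht i')
        simp only [Fin.coe_castLE, i.isLt, i'.isLt, if_true] at this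
        first
          | linear_combination (norm := module) this
          | linear_combination (norm := module) -this
      · rw [kappa_mul_apply_2, mul_kappa_apply_1]
        simp only [piT, Matrix.of_apply, Sum.elim_inl, Sum.elim_inr]
        have := E4 j (Fin.castLE ht i')
        simp only [Fin.coe_castLE, i'.isLt, if_true] at this
        first
          | linear_combination (norm := module) this
          | linear_combination (norm := module) -this
      · rw [kappa_mul_apply_2, mul_kappa_apply_2]
        simp only [piT, Matrix.of_apply, Sum.elim_inl, Sum.elim_inr]
        have := E5 j j'
        first
          | linear_combination (norm := module) this
          | linear_combination (norm := module) -this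
      · rw [kappa_mul_apply_2, mul_kappa_apply_3]
        simp only [piT, Matrix.of_apply, Sum.elim_inl, Sum.elim_inr]
        have := E6 j (Fin.castLE ht i')
        simp only [Fin.coe_castLE, i'.isLt, if_true] at this
        first
          | linear_combination (norm := module) this
          | linear_combination (norm := module) -this
      · rw [kappa_mul_apply_3, mul_kappa_apply_1]
        simp only [piT, Matrix.of_apply, Sum.elim_inl, Sum.elim_inr]
        have := E7 (Fin.castLE ht i) (Fin.castLE ht i')
        simp only [Fin.coe_castLE, i.isLt, i'.isLt, if_true] at this
        first
          | linear_combination (norm := module) this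
          | linear_combination (norm := module) -this
      · rw [kappa_mul_apply_3, mul_kappa_apply_2]
        simp only [piT, Matrix.of_apply, Sum.elim_inl, Sum.elim_inr]
        have := E8 (Fin.castLE ht i) j'
        simp only [Fin.coe_castLE, i.isLt, if_true] at this
        first
          | linear_combination (norm := module) this
          | linear_combination (norm := module) -this
      · rw [kappa_mul_apply_3, mul_kappa_apply_3]
        simp only [piT, Matrix.of_apply, Sum.elim_inl, Sum.elim_inr]
        have := E9 (Fin.castLE ht i) (Fin.castLE ht i')
        simp only [Fin.coe_castLE, i.isLt, i'.isLt, if_true] at this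
        first
          | linear_combination (norm := module) this
          | linear_combination (norm := module) -this
  · rintro ⟨c1b, c2b, c1g, c2g, hk⟩
    have hK := fun p q => congrFun (congrFun hk p) q
    have K1 : ∀ (i j : Fin m) (hi : (i:ℕ) < t) (hj : (j:ℕ) < t),
        -(β (Sum.inr (Sum.inr i)) (Sum.inl j)) = γ (Sum.inl i) (Sum.inr (Sum.inr j)) := by
      intro i j hi hj
      have := hK (Sum.inl ⟨(i:ℕ), hi⟩) (Sum.inl ⟨(j:ℕ), hj⟩)
      rw [kappa_mul_apply_1, mul_kappa_apply_1] at this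
      simpa [piT, Fin.castLE] using this
    have K2 : ∀ (i : Fin m) (j : Fin r) (hi : (i:ℕ) < t),
        -(β (Sum.inr (Sum.inr i)) (Sum.inr (Sum.inl j))) = γ (Sum.inl i) (Sum.inr (Sum.inl j)) := by
      intro i j hi
      have := hK (Sum.inl ⟨(i:ℕ), hi⟩) (Sum.inr (Sum.inl j))
      rw [kappa_mul_apply_1, mul_kappa_apply_2] at this
      simpa [piT, Fin.castLE] using this
    have K3 : ∀ (i j : Fin m) (hi : (i:ℕ) < t) (hj : (j:ℕ) < t),
        β (Sum.inr (Sum.inr i)) (Sum.inr (Sum.inr j)) = γ (Sum.inl i) (Sum.inl j) := by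
      intro i j hi hj
      have := hK (Sum.inl ⟨(i:ℕ), hi⟩) (Sum.inr (Sum.inr ⟨(j:ℕ), hj⟩))
      rw [kappa_mul_apply_1, mul_kappa_apply_3] at this
      simpa [piT, Fin.castLE, neg_inj] using this
    have K4 : ∀ (i : Fin r) (j : Fin m) (hj : (j:ℕ) < t),
        β (Sum.inr (Sum.inl i)) (Sum.inl j) = γ (Sum.inr (Sum.inl i)) (Sum.inr (Sum.inr j)) := by
      intro i j hj
      have := hK (Sum.inr (Sum.inl i)) (Sum.inl ⟨(j:ℕ), hj⟩)
      rw [kappa_mul_apply_2, mul_kappa_apply_1] at this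
      simpa [piT, Fin.castLE] using this
    have K5 : ∀ (i j : Fin r),
        β (Sum.inr (Sum.inl i)) (Sum.inr (Sum.inl j)) = γ (Sum.inr (Sum.inl i)) (Sum.inr (Sum.inl j)) := by
      intro i j
      have := hK (Sum.inr (Sum.inl i)) (Sum.inr (Sum.inl j))
      rw [kappa_mul_apply_2, mul_kappa_apply_2] at this
      simpa [piT] using this
    have K6 : ∀ (i : Fin r) (j : Fin m) (hj : (j:ℕ) < t),
        β (Sum.inr (Sum.inl i)) (Sum.inr (Sum.inr j)) = -(γ (Sum.inr (Sum.inl i)) (Sum.inl j)) := by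
      intro i j hj
      have := hK (Sum.inr (Sum.inl i)) (Sum.inr (Sum.inr ⟨(j:ℕ), hj⟩))
      rw [kappa_mul_apply_2, mul_kappa_apply_3] at this
      simpa [piT, Fin.castLE] using this
    have K7 : ∀ (i j : Fin m) (hi : (i:ℕ) < t) (hj : (j:ℕ) < t),
        β (Sum.inl i) (Sum.inl j) = γ (Sum.inr (Sum.inr i)) (Sum.inr (Sum.inr j)) := by
      intro i j hi hj
      have := hK (Sum.inr (Sum.inr ⟨(i:ℕ), hi⟩)) (Sum.inl ⟨(j:ℕ), hj⟩)
      rw [kappa_mul_apply_3, mul_kappa_apply_1] at this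
      simpa [piT, Fin.castLE] using this
    have K8 : ∀ (i : Fin m) (j : Fin r) (hi : (i:ℕ) < t),
        β (Sum.inl i) (Sum.inr (Sum.inl j)) = γ (Sum.inr (Sum.inr i)) (Sum.inr (Sum.inl j)) := by
      intro i j hi
      have := hK (Sum.inr (Sum.inr ⟨(i:ℕ), hi⟩)) (Sum.inr (Sum.inl j))
      rw [kappa_mul_apply_3, mul_kappa_apply_2] at this
      simpa [piT, Fin.castLE] using this
    have K9 : ∀ (i j : Fin m) (hi : (i:ℕ) < t) (hj : (j:ℕ) < t),
        β (Sum.inl i) (Sum.inr (Sum.inr j)) = -(γ (Sum.inr (Sum.inr i)) (Sum.inl j)) := by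
      intro i j hi hj
      have := hK (Sum.inr (Sum.inr ⟨(i:ℕ), hi⟩)) (Sum.inr (Sum.inr ⟨(j:ℕ), hj⟩))
      rw [kappa_mul_apply_3, mul_kappa_apply_3] at this
      simpa [piT, Fin.castLE] using this
    refine ⟨?_, ?_, ?_, ?_, ?_, ?_, ?_, ?_, ?_⟩
    · refine Matrix.ext fun i j => ?_
      rw [Matrix.add_apply, eT_mul_apply, Matrix.zero_apply]
      by_cases hi : (i:ℕ) < t
      · rw [if_pos hi, mul_eT_apply]
        by_cases hj : (j:ℕ) < t
        · rw [if_pos hj]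
          have := K1 i j hi hj
          simp only [p31, p13, Matrix.of_apply]
          first
          | linear_combination (norm := module) this
          | linear_combination (norm := module) -this
        · rw [if_neg hj]
          have : β (Sum.inr (Sum.inr i)) (Sum.inl j) = 0 :=
            c2b _ _ (by simp) (by simp [not_le.mpr hi]) (by simp [le_of_not_gt hj])
          simp [p31, this]
      · rw [if_neg hi]
        have : β (Sum.inr (Sum.inr i)) (Sum.inl j) = 0 :=
          c1b _ _ (by simp [le_of_not_gt hi]) (by simp)
        simp [p31, this]
    · refine Matrix.ext fun i j => ?_
      rw [Matrix.add_apply, eT_mul_apply, Matrix.zero_apply]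
      by_cases hi : (i:ℕ) < t
      · rw [if_pos hi]
        have := K2 i j hi
        simp only [p12, p32, Matrix.of_apply]
        first
          | linear_combination (norm := module) this
          | linear_combination (norm := module) -this
      · rw [if_neg hi]
        have : β (Sum.inr (Sum.inr i)) (Sum.inr (Sum.inl j)) = 0 :=
          c1b _ _ (by simp [le_of_not_gt hi]) (by simp)
        simp [p32, this]
    · refine Matrix.ext fun i j => ?_
      rw [Matrix.sub_apply, eT_mul_apply, mul_eT_apply, Matrix.zero_apply]
      by_cases hi : (i:ℕ) < t
      · rw [if_pos hi]
        by_cases hj : (j:ℕ) < t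
        · rw [if_pos hj]
          have := K3 i j hi hj
          simp only [p11, p33, Matrix.of_apply]
          first
          | linear_combination (norm := module) this
          | linear_combination (norm := module) -this
        · rw [if_neg hj]
          have : γ (Sum.inl i) (Sum.inl j) = 0 :=
            c2g _ _ (by simp [not_le.mpr hi]) (by simp) (by simp [le_of_not_gt hj])
          simp [p11, this]
      · rw [if_neg hi]
        by_cases hj : (j:ℕ) < t
        · rw [if_pos hj]
          have : β (Sum.inr (Sum.inr i)) (Sum.inr (Sum.inr j)) = 0 :=
            c1b _ _ (by simp [le_of_not_gt hi]) (by simp [not_le.mpr hj])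
          simp [p33, this]
        · rw [if_neg hj]; simp
    · refine Matrix.ext fun i j => ?_
      rw [Matrix.sub_apply, mul_eT_apply, Matrix.zero_apply]
      by_cases hj : (j:ℕ) < t
      · rw [if_pos hj]
        have := K4 i j hj
        simp only [p21, p23, Matrix.of_apply]
        first
          | linear_combination (norm := module) this
          | linear_combination (norm := module) -this
      · rw [if_neg hj]
        have : β (Sum.inr (Sum.inl i)) (Sum.inl j) = 0 :=
          c2b _ _ (by simp) (by simp) (by simp [le_of_not_gt hj])
        simp [p21, this]
    · refine Matrix.ext fun i j => ?_
      rw [Matrix.sub_apply, Matrix.zero_apply]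
      have := K5 i j
      simp only [p22, Matrix.of_apply]
      first
          | linear_combination (norm := module) this
          | linear_combination (norm := module) -this
    · refine Matrix.ext fun i j => ?_
      rw [Matrix.add_apply, mul_eT_apply, Matrix.zero_apply]
      by_cases hj : (j:ℕ) < t
      · rw [if_pos hj]
        have := K6 i j hj
        simp only [p21, p23, Matrix.of_apply]
        first
          | linear_combination (norm := module) this
          | linear_combination (norm := module) -this
      · rw [if_neg hj]
        have : γ (Sum.inr (Sum.inl i)) (Sum.inl j) = 0 :=
          c2g _ _ (by simp) (by simp) (by simp [le_of_not_gt hj])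
        simp [p21, this]
    · refine Matrix.ext fun i j => ?_
      rw [Matrix.sub_apply, eT_mul_apply, mul_eT_apply, Matrix.zero_apply]
      by_cases hi : (i:ℕ) < t
      · rw [if_pos hi]
        by_cases hj : (j:ℕ) < t
        · rw [if_pos hj]
          have := K7 i j hi hj
          simp only [p11, p33, Matrix.of_apply]
          first
          | linear_combination (norm := module) this
          | linear_combination (norm := module) -this
        · rw [if_neg hj]
          have : β (Sum.inl i) (Sum.inl j) = 0 :=
            c2b _ _ (by simp [not_le.mpr hi]) (by simp) (by simp [le_of_not_gt hj])
          simp [p11, this]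
      · rw [if_neg hi]
        by_cases hj : (j:ℕ) < t
        · rw [if_pos hj]
          have : γ (Sum.inr (Sum.inr i)) (Sum.inr (Sum.inr j)) = 0 :=
            c1g _ _ (by simp [le_of_not_gt hi]) (by simp [not_le.mpr hj])
          simp [p33, this]
        · rw [if_neg hj]; simp
    · refine Matrix.ext fun i j => ?_
      rw [Matrix.sub_apply, eT_mul_apply, Matrix.zero_apply]
      by_cases hi : (i:ℕ) < t
      · rw [if_pos hi]
        have := K8 i j hi
        simp only [p12, p32, Matrix.of_apply]
        first
          | linear_combination (norm := module) this
          | linear_combination (norm := module) -this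
      · rw [if_neg hi]
        have : γ (Sum.inr (Sum.inr i)) (Sum.inr (Sum.inl j)) = 0 :=
          c1g _ _ (by simp [le_of_not_gt hi]) (by simp)
        simp [p32, this]
    · refine Matrix.ext fun i j => ?_
      rw [Matrix.sub_apply, Matrix.neg_apply, eT_mul_apply, Matrix.zero_apply]
      by_cases hi : (i:ℕ) < t
      · rw [if_pos hi, mul_eT_apply]
        by_cases hj : (j:ℕ) < t
        · rw [if_pos hj]
          have := K9 i j hi hj
          simp only [p31, p13, Matrix.of_apply]
          first
          | linear_combination (norm := module) this
          | linear_combination (norm := module) -this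
        · rw [if_neg hj]
          have : γ (Sum.inr (Sum.inr i)) (Sum.inl j) = 0 :=
            c2g _ _ (by simp) (by simp [not_le.mpr hi]) (by simp [le_of_not_gt hj])
          simp [p31, this]
      · rw [if_neg hi]
        have : γ (Sum.inr (Sum.inr i)) (Sum.inl j) = 0 :=
          c1g _ _ (by simp [le_of_not_gt hi]) (by simp)
        simp [p31, this]

end


section
set_option linter.unusedSectionVars false
set_option maxHeartbeats 3200000

variable {m r t : ℕ} {a b : ℚ}

lemma tauInvC_mul_tauT : tauInvC m r a b t * tauT m r a b t = 1 := by
  rw [tauT_eq, tauInvC, Matrix.fromBlocks_multiply]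
  simp only [Matrix.one_mul, Matrix.mul_one, Matrix.mul_zero, Matrix.zero_mul,
    add_zero, zero_add, Matrix.neg_mul, neg_add_cancel, add_neg_cancel, neg_zero,
    Matrix.fromBlocks_one]

/-- explicit inverse of `phiQ` -/
def phinvC (m r : ℕ) (a b : ℚ) :
    Matrix (Fin m ⊕ (Fin r ⊕ Fin m)) (Fin m ⊕ (Fin r ⊕ Fin m)) ℍ[ℚ, a, b] :=
  b3 0 0 1 0 (Matrix.diagonal fun _ : Fin r => a⁻¹ • zetaB a b) 0 (-1) 0 0

lemma phinv_mul (ha : a ≠ 0) : phinvC m r a b * phiQ m r a b = 1 := by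
  rw [phinvC, phiQ, b3_mul]
  simp only [Matrix.zero_mul, Matrix.mul_zero, Matrix.one_mul, Matrix.mul_one,
    add_zero, zero_add, Matrix.neg_mul, Matrix.mul_neg, neg_neg, neg_zero,
    Dk_mul_Dz ha, b3_one]

lemma isUnit_of_left_inv {n : Type} [Fintype n] [DecidableEq n]
    {M L : Matrix n n ℍ[ℚ, a, b]} (h : L * M = 1) : IsUnit M := by
  have hinj : Function.Injective (LinearMap.mulLeft ℚ M) := by
    intro x y hxy
    simp only [LinearMap.mulLeft_apply] at hxy
    calc x = (L * M) * x := by rw [h, Matrix.one_mul]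
      _ = L * (M * x) := by rw [Matrix.mul_assoc]
      _ = L * (M * y) := by rw [hxy]
      _ = (L * M) * y := by rw [Matrix.mul_assoc]
      _ = y := by rw [h, Matrix.one_mul]
  have hsurj := LinearMap.injective_iff_surjective.mp hinj
  obtain ⟨w, hw⟩ := hsurj 1
  simp only [LinearMap.mulLeft_apply] at hw
  have hwL : w = L := by
    calc w = (L * M) * w := by rw [h, Matrix.one_mul]
      _ = L * (M * w) := by rw [Matrix.mul_assoc]
      _ = L := by rw [hw, Matrix.mul_one]
  exact ⟨⟨M, w, hw, by rw [hwL, h]⟩, rfl⟩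

lemma smulq_conjT {I J : Type} (q : ℚ) (M : Matrix I J ℍ[ℚ, a, b]) :
    (q • M)ᴴ = q • Mᴴ := by
  have hq : ∀ x : ℍ[ℚ, a, b], star (q • x) = q • star x := fun x => by
    ext <;> simp
  refine Matrix.ext fun i j => ?_
  simp [Matrix.conjTranspose_apply, hq]

lemma fb_congr {n₁ n₂ m₁ m₂ : Type} {R : Type} {A A' : Matrix n₁ m₁ R} {B B' : Matrix n₁ m₂ R}
    {C C' : Matrix n₂ m₁ R} {D D' : Matrix n₂ m₂ R}
    (h1 : A = A') (h2 : B = B') (h3 : C = C') (h4 : D = D') :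
    Matrix.fromBlocks A B C D = Matrix.fromBlocks A' B' C' D' := by
  rw [h1, h2, h3, h4]


end

section
set_option linter.unusedSectionVars false
set_option maxHeartbeats 3200000
variable {m r t : ℕ} {a b : ℚ}
lemma MJ (ha : a ≠ 0) :
    (RinvC m r a b)ᴴ * Matrix.fromBlocks 0 (-1) 1 0 * RinvC m r a b =
      Matrix.fromBlocks (phiQ m r a b) 0 0 (-(phiQ m r a b)) := by
  rw [RinvC, phiQ, Matrix.fromBlocks_conjTranspose, Matrix.fromBlocks_multiply,
    Matrix.fromBlocks_multiply]
  simp only [b3_conjT, Matrix.conjTranspose_zero, Matrix.conjTranspose_one,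
    Matrix.conjTranspose_neg, smulq_conjT, starDz, b3_mul, b3_add, b3_neg,
    Matrix.zero_mul, Matrix.mul_zero, Matrix.one_mul, Matrix.mul_one, add_zero,
    zero_add, Matrix.neg_mul, Matrix.mul_neg, neg_neg, neg_zero, smul_neg,
    Matrix.smul_mul, Matrix.mul_smul, smul_zero]
  refine fb_congr ?_ ?_ ?_ ?_ <;>
    first
      | (refine b3_congr ?_ ?_ ?_ ?_ ?_ ?_ ?_ ?_ ?_ <;> module)
      | (rw [← b3_zero]; refine b3_congr ?_ ?_ ?_ ?_ ?_ ?_ ?_ ?_ ?_ <;> module)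

lemma tauJ :
    (tauT m r a b t)ᴴ * Matrix.fromBlocks 0 (-1) 1 0 * tauT m r a b t =
      Matrix.fromBlocks 0 (-1) 1 0 := by
  rw [tauT_eq, Matrix.fromBlocks_conjTranspose, Matrix.fromBlocks_multiply,
    Matrix.fromBlocks_multiply]
  simp only [b3_conjT, Matrix.conjTranspose_zero, Matrix.conjTranspose_one, eT_conjT,
    Matrix.zero_mul, Matrix.mul_zero, Matrix.one_mul, Matrix.mul_one, add_zero,
    zero_add, Matrix.neg_mul, Matrix.mul_neg, neg_zero]
  refine fb_congr ?_ ?_ ?_ ?_ <;> first | rfl | (try rw [b3_zero]) <;> abel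

lemma tauInvCJ :
    (tauInvC m r a b t)ᴴ * Matrix.fromBlocks 0 (-1) 1 0 * tauInvC m r a b t =
      Matrix.fromBlocks 0 (-1) 1 0 := by
  rw [tauInvC, Matrix.fromBlocks_conjTranspose, Matrix.fromBlocks_multiply,
    Matrix.fromBlocks_multiply]
  simp only [b3_conjT, Matrix.conjTranspose_zero, Matrix.conjTranspose_one, eT_conjT,
    Matrix.conjTranspose_neg,
    Matrix.zero_mul, Matrix.mul_zero, Matrix.one_mul, Matrix.mul_one, add_zero,
    zero_add, Matrix.neg_mul, Matrix.mul_neg, neg_zero, neg_neg]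
  refine fb_congr ?_ ?_ ?_ ?_ <;> first | rfl | (try rw [b3_zero]) <;> abel

lemma sandwich {n : Type} [Fintype n] {A Bm C : Matrix n n ℍ[ℚ, a, b]}
    (h : Aᴴ * Bm * A = C) (Z : Matrix n n ℍ[ℚ, a, b]) :
    Aᴴ * (Bm * (A * Z)) = C * Z := by
  rw [← Matrix.mul_assoc, ← Matrix.mul_assoc, h]

lemma Y_mem_GN (ha : a ≠ 0)
    {β γ : Matrix (Fin m ⊕ (Fin r ⊕ Fin m)) (Fin m ⊕ (Fin r ⊕ Fin m)) ℍ[ℚ, a, b]}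
    (hβ : βᴴ * phiQ m r a b * β = phiQ m r a b)
    (hγ : γᴴ * phiQ m r a b * γ = phiQ m r a b)
    (hβu : IsUnit β) (hγu : IsUnit γ) :
    tauT m r a b t * (RinvC m r a b * Matrix.fromBlocks β 0 0 γ * Rdbl m r a b) *
      tauInvC m r a b t ∈ GNQ m r a b := by
  constructor
  · obtain ⟨βu, hβu'⟩ := hβu
    obtain ⟨γu, hγu'⟩ := hγu
    have hD : IsUnit (Matrix.fromBlocks β 0 0 γ) := by
      have h1 : Matrix.fromBlocks β 0 0 γ *
          Matrix.fromBlocks (Units.val βu⁻¹) 0 0 (Units.val γu⁻¹) = 1 := by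
        rw [Matrix.fromBlocks_multiply, ← hβu', ← hγu']
        simp only [Matrix.mul_zero, Matrix.zero_mul, add_zero, zero_add,
          Units.mul_inv, Matrix.fromBlocks_one]
      have h2 : Matrix.fromBlocks (Units.val βu⁻¹) 0 0 (Units.val γu⁻¹) *
          Matrix.fromBlocks β 0 0 γ = 1 := by
        rw [Matrix.fromBlocks_multiply, ← hβu', ← hγu']
        simp only [Matrix.mul_zero, Matrix.zero_mul, add_zero, zero_add,
          Units.inv_mul, Matrix.fromBlocks_one]
      exact ⟨⟨_, _, h1, h2⟩, rfl⟩
    have hτ : IsUnit (tauT m r a b t) :=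
      ⟨⟨_, tauInvC m r a b t, tauT_mul_tauInvC, tauInvC_mul_tauT⟩, rfl⟩
    have hτ' : IsUnit (tauInvC m r a b t) :=
      ⟨⟨_, tauT m r a b t, tauInvC_mul_tauT, tauT_mul_tauInvC⟩, rfl⟩
    have hRi : IsUnit (RinvC m r a b) :=
      ⟨⟨_, Rdbl m r a b, RinvC_mul_Rdbl ha, Rdbl_mul_RinvC ha⟩, rfl⟩
    have hRd : IsUnit (Rdbl m r a b) :=
      ⟨⟨_, RinvC m r a b, Rdbl_mul_RinvC ha, RinvC_mul_Rdbl ha⟩, rfl⟩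
    exact (hτ.mul ((hRi.mul hD).mul hRd)).mul hτ'
  · have hD : (Matrix.fromBlocks β 0 0 γ)ᴴ *
        Matrix.fromBlocks (phiQ m r a b) 0 0 (-(phiQ m r a b)) *
        Matrix.fromBlocks β 0 0 γ =
        Matrix.fromBlocks (phiQ m r a b) 0 0 (-(phiQ m r a b)) := by
      rw [Matrix.fromBlocks_conjTranspose, Matrix.fromBlocks_multiply,
        Matrix.fromBlocks_multiply]
      simp only [Matrix.mul_zero, Matrix.zero_mul, add_zero, zero_add, neg_zero,
        Matrix.conjTranspose_zero, Matrix.neg_mul, Matrix.mul_neg]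
      rw [hβ, hγ]
    have hXJ : (RinvC m r a b * Matrix.fromBlocks β 0 0 γ * Rdbl m r a b)ᴴ *
        Matrix.fromBlocks 0 (-1) 1 0 *
        (RinvC m r a b * Matrix.fromBlocks β 0 0 γ * Rdbl m r a b) =
        Matrix.fromBlocks 0 (-1) 1 0 := by
      have e1 : (RinvC m r a b * Matrix.fromBlocks β 0 0 γ * Rdbl m r a b)ᴴ *
          Matrix.fromBlocks 0 (-1) 1 0 *
          (RinvC m r a b * Matrix.fromBlocks β 0 0 γ * Rdbl m r a b) =
          (Rdbl m r a b)ᴴ * ((Matrix.fromBlocks β 0 0 γ)ᴴ *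
            ((RinvC m r a b)ᴴ * (Matrix.fromBlocks 0 (-1) 1 0 *
              (RinvC m r a b * (Matrix.fromBlocks β 0 0 γ * Rdbl m r a b))))) := by
        simp only [Matrix.conjTranspose_mul, Matrix.mul_assoc]
      rw [e1, sandwich (MJ ha), sandwich hD]
      rw [← MJ ha]
      calc (Rdbl m r a b)ᴴ * ((RinvC m r a b)ᴴ * Matrix.fromBlocks 0 (-1) 1 0 *
            RinvC m r a b * Rdbl m r a b) =
          (RinvC m r a b * Rdbl m r a b)ᴴ * Matrix.fromBlocks 0 (-1) 1 0 *
            (RinvC m r a b * Rdbl m r a b) := by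
            simp only [Matrix.conjTranspose_mul, Matrix.mul_assoc]
        _ = Matrix.fromBlocks 0 (-1) 1 0 := by
            rw [RinvC_mul_Rdbl ha]
            simp
    have expand : (tauT m r a b t * (RinvC m r a b * Matrix.fromBlocks β 0 0 γ *
        Rdbl m r a b) * tauInvC m r a b t)ᴴ * Matrix.fromBlocks 0 (-1) 1 0 *
        (tauT m r a b t * (RinvC m r a b * Matrix.fromBlocks β 0 0 γ * Rdbl m r a b) *
          tauInvC m r a b t) =
        (tauInvC m r a b t)ᴴ *
          ((RinvC m r a b * Matrix.fromBlocks β 0 0 γ * Rdbl m r a b)ᴴ *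
            ((tauT m r a b t)ᴴ * (Matrix.fromBlocks 0 (-1) 1 0 *
              (tauT m r a b t * ((RinvC m r a b * Matrix.fromBlocks β 0 0 γ *
                Rdbl m r a b) * tauInvC m r a b t))))) := by
      simp only [Matrix.conjTranspose_mul, Matrix.mul_assoc]
    rw [expand, sandwich tauJ, sandwich hXJ, ← Matrix.mul_assoc, tauInvCJ]

end

/-- `Vₜ = τₜ (Gₙ × Gₙ) τₜ⁻¹ ∩ P_N` equals
`{β × γ ∈ Pₙᵗ × Pₙᵗ : κₜ πₜ(β) = πₜ(γ) κₜ}` (transported by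
`τₜ (·) τₜ⁻¹`). -/
theorem stmt19 (m r : ℕ) (a b : ℚ) (ha : a < 0) (hb : b < 0)
    (t : ℕ) (ht : t ≤ m)
    (Rinv : Matrix ((Fin m ⊕ (Fin r ⊕ Fin m)) ⊕ (Fin m ⊕ (Fin r ⊕ Fin m)))
      ((Fin m ⊕ (Fin r ⊕ Fin m)) ⊕ (Fin m ⊕ (Fin r ⊕ Fin m))) ℍ[ℚ, a, b])
    (hR : Rdbl m r a b * Rinv = 1) (hR' : Rinv * Rdbl m r a b = 1)
    (tauInv : Matrix ((Fin m ⊕ (Fin r ⊕ Fin m)) ⊕ (Fin m ⊕ (Fin r ⊕ Fin m)))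
      ((Fin m ⊕ (Fin r ⊕ Fin m)) ⊕ (Fin m ⊕ (Fin r ⊕ Fin m))) ℍ[ℚ, a, b])
    (hτ : tauT m r a b t * tauInv = 1) (hτ' : tauInv * tauT m r a b t = 1) :
    {x | ∃ β ∈ GnQ m r a b, ∃ γ ∈ GnQ m r a b,
        x = tauT m r a b t * rhoD m r a b Rinv β γ * tauInv} ∩
      PNQ m r a b =
    {x | ∃ β ∈ PntQ m r a b t, ∃ γ ∈ PntQ m r a b t,
        kappaT r a b t * piT m r a b t ht β =
          piT m r a b t ht γ * kappaT r a b t ∧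
        x = tauT m r a b t * rhoD m r a b Rinv β γ * tauInv} := by
  have ha0 : a ≠ 0 := ne_of_lt ha
  have hRinv : Rinv = RinvC m r a b := by
    calc Rinv = Rinv * (Rdbl m r a b * RinvC m r a b) := by
          rw [Rdbl_mul_RinvC ha0, Matrix.mul_one]
      _ = (Rinv * Rdbl m r a b) * RinvC m r a b := by rw [Matrix.mul_assoc]
      _ = RinvC m r a b := by rw [hR', Matrix.one_mul]
  have hTinv : tauInv = tauInvC m r a b t := by
    calc tauInv = tauInv * (tauT m r a b t * tauInvC m r a b t) := by
          rw [tauT_mul_tauInvC, Matrix.mul_one]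
      _ = (tauInv * tauT m r a b t) * tauInvC m r a b t := by rw [Matrix.mul_assoc]
      _ = tauInvC m r a b t := by rw [hτ', Matrix.one_mul]
  subst hRinv hTinv
  ext x
  simp only [Set.mem_inter_iff, Set.mem_setOf_eq]
  constructor
  · rintro ⟨⟨β, hβ, γ, hγ, rfl⟩, hPN⟩
    have hblock : (tauT m r a b t * rhoD m r a b (RinvC m r a b) β γ *
        tauInvC m r a b t).toBlocks₂₁ = 0 := hPN.2
    rw [rhoD, Zcomp, main_iff ha0 ht] at hblock
    obtain ⟨c1b, c2b, c1g, c2g, hk⟩ := hblock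
    exact ⟨β, ⟨hβ, c1b, c2b⟩, γ, ⟨hγ, c1g, c2g⟩, hk, rfl⟩
  · rintro ⟨β, ⟨hβ, c1b, c2b⟩, γ, ⟨hγ, c1g, c2g⟩, hk, rfl⟩
    refine ⟨⟨β, hβ, γ, hγ, rfl⟩, ?_, ?_⟩
    · rw [rhoD]
      refine Y_mem_GN ha0 hβ.1 hγ.1 ?_ ?_
      · refine isUnit_of_left_inv
          (L := phinvC m r a b * (βᴴ * phiQ m r a b)) ?_
        rw [Matrix.mul_assoc, hβ.1, phinv_mul ha0]
      · refine isUnit_of_left_inv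
          (L := phinvC m r a b * (γᴴ * phiQ m r a b)) ?_
        rw [Matrix.mul_assoc, hγ.1, phinv_mul ha0]
    · rw [rhoD, Zcomp, main_iff ha0 ht]
      exact ⟨c1b, c2b, c1g, c2g, hk⟩
end
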